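/- arXiv:1509.06584 — 13 statements merged into one kernel-verified Lean document; each statement's English description precedes it below -/
import Mathlib

section
/- For every x ∈ ℝ^n and every 0 < μ₁ < μ₂, the log-exponential aggregation function satisfies f(x;μ₁) < f(x;μ₂). -/
open Real Filter

noncomputable section

variable {n m : ℕ}

/-- `g_i(x;μ) = √(‖x − c_i‖² + μ²)`. -/
def sebG (c : Fin m → EuclideanSpace ℝ (Fin n)) (μ : ℝ) (x : EuclideanSpace ℝ (Fin n))
    (i : Fin m) : ℝ :=
  Real.sqrt (‖x - c i‖ ^ 2 + μ ^ 2)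

/-- `f_i(x;μ) = g_i(x;μ) + r_i`. -/
def sebFi (c : Fin m → EuclideanSpace ℝ (Fin n)) (r : Fin m → ℝ) (μ : ℝ)
    (x : EuclideanSpace ℝ (Fin n)) (i : Fin m) : ℝ :=
  sebG c μ x i + r i

/-- the log-exponential aggregation function `f(x;μ) = μ ln(Σ_i exp(f_i(x;μ)/μ))`. -/
def sebFmu (c : Fin m → EuclideanSpace ℝ (Fin n)) (r : Fin m → ℝ) (μ : ℝ)
    (x : EuclideanSpace ℝ (Fin n)) : ℝ :=
  μ * Real.log (∑ i : Fin m, Real.exp (sebFi c r μ x i / μ))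

/-- `f(x) = max_i (‖x − c_i‖ + r_i)`. -/
def sebF (c : Fin m → EuclideanSpace ℝ (Fin n)) (r : Fin m → ℝ)
    (x : EuclideanSpace ℝ (Fin n)) : ℝ :=
  ⨆ i : Fin m, (‖x - c i‖ + r i)

/-- `f_∞(x;μ) = max_i f_i(x;μ)`. -/
def sebFinf (c : Fin m → EuclideanSpace ℝ (Fin n)) (r : Fin m → ℝ) (μ : ℝ)
    (x : EuclideanSpace ℝ (Fin n)) : ℝ :=
  ⨆ i : Fin m, sebFi c r μ x i

/-- `λ_i(x;μ)`. -/
def sebLam (c : Fin m → EuclideanSpace ℝ (Fin n)) (r : Fin m → ℝ) (μ : ℝ)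
    (x : EuclideanSpace ℝ (Fin n)) (i : Fin m) : ℝ :=
  Real.exp (sebFi c r μ x i / μ) / ∑ j : Fin m, Real.exp (sebFi c r μ x j / μ)

/-- `∇f_i(x;μ) = (x − c_i)/g_i(x;μ)`. -/
def sebGradI (c : Fin m → EuclideanSpace ℝ (Fin n)) (μ : ℝ)
    (x : EuclideanSpace ℝ (Fin n)) (i : Fin m) : EuclideanSpace ℝ (Fin n) :=
  (sebG c μ x i)⁻¹ • (x - c i)

/-- `∇f(x;μ) = Σ_i λ_i(x;μ) ∇f_i(x;μ)`. -/
def sebGrad (c : Fin m → EuclideanSpace ℝ (Fin n)) (r : Fin m → ℝ) (μ : ℝ)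
    (x : EuclideanSpace ℝ (Fin n)) : EuclideanSpace ℝ (Fin n) :=
  ∑ i : Fin m, sebLam c r μ x i • sebGradI c μ x i

/-- `S(x;μ,ε) = {i : λ_i(x;μ) ≥ ε}`. -/
def sebS (c : Fin m → EuclideanSpace ℝ (Fin n)) (r : Fin m → ℝ) (μ ε : ℝ)
    (x : EuclideanSpace ℝ (Fin n)) : Finset (Fin m) :=
  Finset.univ.filter (fun i => ε ≤ sebLam c r μ x i)

/-- `λ̃_i(x;μ)`. -/
def sebLamT (c : Fin m → EuclideanSpace ℝ (Fin n)) (r : Fin m → ℝ) (μ ε : ℝ)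
    (x : EuclideanSpace ℝ (Fin n)) (i : Fin m) : ℝ :=
  Real.exp (sebFi c r μ x i / μ) / ∑ j ∈ sebS c r μ ε x, Real.exp (sebFi c r μ x j / μ)

/-- the truncated log-exponential function `f̃(x;μ)`. -/
def sebFmuT (c : Fin m → EuclideanSpace ℝ (Fin n)) (r : Fin m → ℝ) (μ ε : ℝ)
    (x : EuclideanSpace ℝ (Fin n)) : ℝ :=
  μ * Real.log (∑ i ∈ sebS c r μ ε x, Real.exp (sebFi c r μ x i / μ))

/-- `∇f̃(x;μ) = Σ_{i∈S} λ̃_i(x;μ) ∇f_i(x;μ)`. -/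
def sebGradT (c : Fin m → EuclideanSpace ℝ (Fin n)) (r : Fin m → ℝ) (μ ε : ℝ)
    (x : EuclideanSpace ℝ (Fin n)) : EuclideanSpace ℝ (Fin n) :=
  ∑ i ∈ sebS c r μ ε x, sebLamT c r μ ε x i • sebGradI c μ x i

/-- `∇²f_i(x;μ) = (1/g_i) I_n − (x−c_i)(x−c_i)ᵀ/g_i³` as an `n×n` matrix. -/
def sebHessI (c : Fin m → EuclideanSpace ℝ (Fin n)) (μ : ℝ)
    (x : EuclideanSpace ℝ (Fin n)) (i : Fin m) : Matrix (Fin n) (Fin n) ℝ :=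
  (sebG c μ x i)⁻¹ • (1 : Matrix (Fin n) (Fin n) ℝ)
    - ((sebG c μ x i) ^ 3)⁻¹ •
        Matrix.vecMulVec (fun j => (x - c i) j) (fun j => (x - c i) j)

/-- `∇²f(x;μ)` as an `n×n` matrix. -/
def sebHess (c : Fin m → EuclideanSpace ℝ (Fin n)) (r : Fin m → ℝ) (μ : ℝ)
    (x : EuclideanSpace ℝ (Fin n)) : Matrix (Fin n) (Fin n) ℝ :=
  (∑ i : Fin m, (sebLam c r μ x i • sebHessI c μ x i
      + (μ⁻¹ * sebLam c r μ x i) •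
          Matrix.vecMulVec (fun j => sebGradI c μ x i j) (fun j => sebGradI c μ x i j)))
    - μ⁻¹ • Matrix.vecMulVec (fun j => sebGrad c r μ x j) (fun j => sebGrad c r μ x j)

/-- `∇²f̃(x;μ)` as an `n×n` matrix. -/
def sebHessT (c : Fin m → EuclideanSpace ℝ (Fin n)) (r : Fin m → ℝ) (μ ε : ℝ)
    (x : EuclideanSpace ℝ (Fin n)) : Matrix (Fin n) (Fin n) ℝ :=
  (∑ i ∈ sebS c r μ ε x, (sebLamT c r μ ε x i • sebHessI c μ x i
      + (μ⁻¹ * sebLamT c r μ ε x i) •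
          Matrix.vecMulVec (fun j => sebGradI c μ x i j) (fun j => sebGradI c μ x i j)))
    - μ⁻¹ • Matrix.vecMulVec (fun j => sebGradT c r μ ε x j) (fun j => sebGradT c r μ ε x j)

end

/-!
The aggregation function is `μ log ∑ᵢ exp(aᵢ/μ) = log ‖(exp aᵢ)ᵢ‖_{1/μ}` with `aᵢ = f_i(x;μ)`.
Raising `μ` does two things: each `f_i(x;μ) = √(‖x − c_i‖² + μ²) + r_i` strictly increases, and
for fixed arguments the `ℓ^{1/μ}`-norm does not decrease, because `ℓ^p`-norms are antitone in `p`,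
i.e. `∑ᵢ yᵢ^p ≤ (∑ᵢ yᵢ)^p` for `p ≥ 1`.
-/

theorem Finset.sum_rpow_le_rpow_sum {ι : Type*} (s : Finset ι) {f : ι → ℝ}
    (hf : ∀ i ∈ s, 0 ≤ f i) {p : ℝ} (hp : 1 ≤ p) :
    ∑ i ∈ s, f i ^ p ≤ (∑ i ∈ s, f i) ^ p := by
  have hS : 0 ≤ ∑ i ∈ s, f i := Finset.sum_nonneg hf
  have split_rpow : ∀ y : ℝ, 0 ≤ y → y ^ p = y * y ^ (p - 1) := fun y hy => by
    rw [← Real.rpow_one_add' hy (by linarith), add_sub_cancel]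
  calc ∑ i ∈ s, f i ^ p = ∑ i ∈ s, f i * f i ^ (p - 1) :=
        Finset.sum_congr rfl fun i hi => split_rpow _ (hf i hi)
    _ ≤ ∑ i ∈ s, f i * (∑ j ∈ s, f j) ^ (p - 1) :=
        Finset.sum_le_sum fun i hi => mul_le_mul_of_nonneg_left
          (Real.rpow_le_rpow (hf i hi) (Finset.single_le_sum hf hi) (by linarith)) (hf i hi)
    _ = (∑ i ∈ s, f i) ^ p := by rw [← Finset.sum_mul, ← split_rpow _ hS]

noncomputable def logSumExp {ι : Type*} [Fintype ι] (μ : ℝ) (a : ι → ℝ) : ℝ :=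
  μ * Real.log (∑ i, Real.exp (a i / μ))

section LogSumExp

variable {ι : Type*} [Fintype ι] [Nonempty ι]

theorem logSumExp_lt_logSumExp {μ : ℝ} (hμ : 0 < μ) {a b : ι → ℝ} (hab : ∀ i, a i < b i) :
    logSumExp μ a < logSumExp μ b := by
  refine mul_lt_mul_of_pos_left (Real.log_lt_log (by positivity) ?_) hμ
  exact Finset.sum_lt_sum_of_nonempty Finset.univ_nonempty fun i _ =>
    Real.exp_lt_exp.2 (div_lt_div_of_pos_right (hab i) hμ)

theorem logSumExp_le_logSumExp_of_le {μ₁ μ₂ : ℝ} (hμ₁ : 0 < μ₁) (hμ₁₂ : μ₁ ≤ μ₂) (a : ι → ℝ) :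
    logSumExp μ₁ a ≤ logSumExp μ₂ a := by
  have hμ₂ : 0 < μ₂ := hμ₁.trans_le hμ₁₂
  have hp : 1 ≤ μ₂ / μ₁ := (one_le_div hμ₁).2 hμ₁₂
  have exp_div : ∀ i, Real.exp (a i / μ₁) = Real.exp (a i / μ₂) ^ (μ₂ / μ₁) := fun i => by
    rw [← Real.exp_mul]
    field_simp
  have hsum : ∑ i, Real.exp (a i / μ₁) ≤ (∑ i, Real.exp (a i / μ₂)) ^ (μ₂ / μ₁) := by
    simp only [exp_div]
    exact Finset.univ.sum_rpow_le_rpow_sum (fun i _ => (Real.exp_pos _).le) hp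
  calc logSumExp μ₁ a ≤ μ₁ * Real.log ((∑ i, Real.exp (a i / μ₂)) ^ (μ₂ / μ₁)) :=
        mul_le_mul_of_nonneg_left (Real.log_le_log (by positivity) hsum) hμ₁.le
    _ = logSumExp μ₂ a := by
        rw [Real.log_rpow (by positivity), logSumExp]
        field_simp

end LogSumExp

theorem sebFi_lt_sebFi {n m : ℕ} (c : Fin m → EuclideanSpace ℝ (Fin n)) (r : Fin m → ℝ)
    (x : EuclideanSpace ℝ (Fin n)) {μ₁ μ₂ : ℝ} (hμ₁ : 0 ≤ μ₁) (hμ₁₂ : μ₁ < μ₂) (i : Fin m) :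
    sebFi c r μ₁ x i < sebFi c r μ₂ x i := by
  have hsq : μ₁ ^ 2 < μ₂ ^ 2 := pow_lt_pow_left₀ hμ₁₂ hμ₁ two_ne_zero
  unfold sebFi sebG
  gcongr

theorem stmt_0_general (n m : ℕ) (hm : 1 ≤ m) (c : Fin m → EuclideanSpace ℝ (Fin n))
    (r : Fin m → ℝ) (x : EuclideanSpace ℝ (Fin n))
    (μ₁ μ₂ : ℝ) (hμ₁ : 0 < μ₁) (hμ₁₂ : μ₁ < μ₂) :
    sebFmu c r μ₁ x < sebFmu c r μ₂ x := by
  have : Nonempty (Fin m) := ⟨⟨0, hm⟩⟩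
  calc sebFmu c r μ₁ x = logSumExp μ₁ (sebFi c r μ₁ x) := rfl
    _ < logSumExp μ₁ (sebFi c r μ₂ x) :=
        logSumExp_lt_logSumExp hμ₁ (sebFi_lt_sebFi c r x hμ₁.le hμ₁₂)
    _ ≤ logSumExp μ₂ (sebFi c r μ₂ x) := logSumExp_le_logSumExp_of_le hμ₁ hμ₁₂.le _

theorem stmt_0 (n m : ℕ) (hm : 1 ≤ m) (c : Fin m → EuclideanSpace ℝ (Fin n))
    (r : Fin m → ℝ) (hr : ∀ i, 0 ≤ r i) (x : EuclideanSpace ℝ (Fin n))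
    (μ₁ μ₂ : ℝ) (hμ₁ : 0 < μ₁) (hμ₁₂ : μ₁ < μ₂) :
    sebFmu c r μ₁ x < sebFmu c r μ₂ x :=
  stmt_0_general n m hm c r x μ₁ μ₂ hμ₁ hμ₁₂
end

section
/- For every x ∈ ℝ^n and every μ > 0, f(x) < f(x;μ) ≤ f(x) + μ(1 + ln m). -/
set_option maxHeartbeats 1000000


open Real Filter

theorem stmt_1 (n m : ℕ) (hm : 1 ≤ m) (c : Fin m → EuclideanSpace ℝ (Fin n))
    (r : Fin m → ℝ) (hr : ∀ i, 0 ≤ r i) (x : EuclideanSpace ℝ (Fin n))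
    (μ : ℝ) (hμ : 0 < μ) :
    sebF c r x < sebFmu c r μ x ∧
      sebFmu c r μ x ≤ sebF c r x + μ * (1 + Real.log m) := by
  have hne : Nonempty (Fin m) := ⟨⟨0, hm⟩⟩
  have hbdd : BddAbove (Set.range fun i : Fin m => ‖x - c i‖ + r i) :=
    Set.Finite.bddAbove (Set.finite_range _)
  have hle : ∀ i, ‖x - c i‖ + r i ≤ sebF c r x := fun i => le_ciSup hbdd i
  have hg_lt : ∀ i, ‖x - c i‖ < sebG c μ x i := by
    intro i
    have h1 : ‖x - c i‖ = Real.sqrt (‖x - c i‖ ^ 2) := by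
      rw [Real.sqrt_sq (norm_nonneg _)]
    rw [h1, sebG]
    exact Real.sqrt_lt_sqrt (sq_nonneg _) (by nlinarith)
  have hg_le : ∀ i, sebG c μ x i ≤ ‖x - c i‖ + μ := by
    intro i
    rw [sebG, show ‖x - c i‖ + μ = Real.sqrt ((‖x - c i‖ + μ) ^ 2) from
      (Real.sqrt_sq (by positivity)).symm]
    apply Real.sqrt_le_sqrt
    nlinarith [norm_nonneg (x - c i)]
  have hsum_pos : 0 < ∑ j : Fin m, Real.exp (sebFi c r μ x j / μ) :=
    Finset.sum_pos (fun j _ => Real.exp_pos _) Finset.univ_nonempty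
  constructor
  · obtain ⟨j, hj⟩ := exists_eq_ciSup_of_finite (f := fun i : Fin m => ‖x - c i‖ + r i)
    have h1 : sebF c r x < sebFi c r μ x j := by
      rw [sebF, ← hj, sebFi]; linarith [hg_lt j]
    have hterm : Real.exp (sebFi c r μ x j / μ) ≤ ∑ i : Fin m, Real.exp (sebFi c r μ x i / μ) :=
      Finset.single_le_sum (f := fun i => Real.exp (sebFi c r μ x i / μ)) (fun i _ => (Real.exp_pos _).le) (Finset.mem_univ j)
    have hlog : sebFi c r μ x j / μ ≤ Real.log (∑ i : Fin m, Real.exp (sebFi c r μ x i / μ)) := by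
      have := Real.log_le_log (Real.exp_pos _) hterm
      rwa [Real.log_exp] at this
    have h2 : sebFi c r μ x j ≤ sebFmu c r μ x := by
      rw [sebFmu]
      calc sebFi c r μ x j = μ * (sebFi c r μ x j / μ) := by field_simp
        _ ≤ _ := by gcongr
    linarith
  · have hfi_le : ∀ i, sebFi c r μ x i ≤ sebF c r x + μ := by
      intro i
      have := hg_le i
      have := hle i
      rw [sebFi]; linarith
    have hsum_le : (∑ i : Fin m, Real.exp (sebFi c r μ x i / μ))
        ≤ m * Real.exp ((sebF c r x + μ) / μ) := by
      calc (∑ i : Fin m, Real.exp (sebFi c r μ x i / μ))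
          ≤ ∑ _i : Fin m, Real.exp ((sebF c r x + μ) / μ) := by
            apply Finset.sum_le_sum (f := fun i => Real.exp (sebFi c r μ x i / μ))
              (g := fun _ => Real.exp ((sebF c r x + μ) / μ))
            intro i _
            exact Real.exp_le_exp.mpr (div_le_div_of_nonneg_right (hfi_le i) hμ.le)
        _ = m * Real.exp ((sebF c r x + μ) / μ) := by
            rw [Finset.sum_const, Finset.card_univ, Fintype.card_fin, nsmul_eq_mul]
    have hm0 : (0:ℝ) < m := by exact_mod_cast hm
    have hlog : Real.log (∑ i : Fin m, Real.exp (sebFi c r μ x i / μ))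
        ≤ Real.log m + (sebF c r x + μ) / μ := by
      calc Real.log (∑ i : Fin m, Real.exp (sebFi c r μ x i / μ))
          ≤ Real.log (m * Real.exp ((sebF c r x + μ) / μ)) :=
            Real.log_le_log hsum_pos hsum_le
        _ = Real.log m + (sebF c r x + μ) / μ := by
            rw [Real.log_mul hm0.ne' (Real.exp_ne_zero _), Real.log_exp]
    rw [sebFmu]
    have := mul_le_mul_of_nonneg_left hlog hμ.le
    calc μ * Real.log (∑ i : Fin m, Real.exp (sebFi c r μ x i / μ))
        ≤ μ * (Real.log m + (sebF c r x + μ) / μ) := this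
      _ = sebF c r x + μ * (1 + Real.log m) := by field_simp; ring
end

section
/- For every μ > 0, the function x ↦ f(x;μ) is strictly convex on ℝ^n. -/
open Real Filter

/-!
`√(‖x - c‖² + μ²)` is the norm of `(x - c, μ)` in the Euclidean space `E × ℝ`. Distinct points with
the same last coordinate `μ ≠ 0` never lie on a common ray, so the triangle inequality between them
is strict: each `f_i` is strictly convex. Log-sum-exp is convex (Hölder's inequality) and strictly
increasing in each argument, so composed with the strictly convex `f_i / μ` it is strictly convex.
-/

open Set

section SmoothedNorm

variable {E : Type*} [NormedAddCommGroup E]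

lemma sqrt_norm_sq_add_sq_eq_norm_toLp (x : E) (μ : ℝ) :
    √(‖x‖ ^ 2 + μ ^ 2) = ‖WithLp.toLp 2 (x, μ)‖ := by
  simp [WithLp.prod_norm_eq_of_L2]

variable [InnerProductSpace ℝ E]

lemma not_sameRay_toLp_prod {x y : E} {μ : ℝ} (hμ : μ ≠ 0) (hxy : x ≠ y) :
    ¬ SameRay ℝ (WithLp.toLp 2 (x, μ)) (WithLp.toLp 2 (y, μ)) := by
  intro h
  obtain ⟨s, t, -, ht, hst⟩ := h.exists_pos (by simp [hμ]) (by simp [hμ])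
  have hfst : s • x = t • y := congrArg (fun p => (WithLp.ofLp p).1) hst
  have hsnd : s * μ = t * μ := congrArg (fun p => (WithLp.ofLp p).2) hst
  rw [mul_right_cancel₀ hμ hsnd] at hfst
  exact hxy (smul_right_injective E ht.ne' hfst)

theorem strictConvexOn_sqrt_norm_sq_add_sq {μ : ℝ} (hμ : μ ≠ 0) :
    StrictConvexOn ℝ univ (fun x : E => √(‖x‖ ^ 2 + μ ^ 2)) := by
  refine ⟨convex_univ, fun x _ y _ hxy a b ha hb hab => ?_⟩
  have hcombo : WithLp.toLp 2 (a • x + b • y, μ)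
      = a • WithLp.toLp 2 (x, μ) + b • WithLp.toLp 2 (y, μ) := by
    rw [← WithLp.toLp_smul, ← WithLp.toLp_smul, ← WithLp.toLp_add]
    simp [← add_mul, hab]
  simp only [sqrt_norm_sq_add_sq_eq_norm_toLp, hcombo, smul_eq_mul]
  have hray : ¬ SameRay ℝ (a • WithLp.toLp 2 (x, μ)) (b • WithLp.toLp 2 (y, μ)) := fun h =>
    not_sameRay_toLp_prod hμ hxy <| by
      simpa [inv_smul_smul₀ ha.ne', inv_smul_smul₀ hb.ne'] using
        (h.pos_smul_left (inv_pos.2 ha)).pos_smul_right (inv_pos.2 hb)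
  calc _ < ‖a • WithLp.toLp 2 (x, μ)‖ + ‖b • WithLp.toLp 2 (y, μ)‖ :=
        norm_add_lt_of_not_sameRay hray
    _ = _ := by rw [norm_smul, norm_smul, Real.norm_of_nonneg ha.le, Real.norm_of_nonneg hb.le]

theorem strictConvexOn_sqrt_norm_sub_sq_add_sq (c : E) {μ : ℝ} (hμ : μ ≠ 0) :
    StrictConvexOn ℝ univ (fun x : E => √(‖x - c‖ ^ 2 + μ ^ 2)) := by
  simpa [Function.comp_def, sub_eq_add_neg] using
    (strictConvexOn_sqrt_norm_sq_add_sq (E := E) hμ).translate_left (-c)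

end SmoothedNorm

lemma StrictConvexOn.const_mul {E : Type*} [AddCommMonoid E] [Module ℝ E] {s : Set E}
    {f : E → ℝ} (hf : StrictConvexOn ℝ s f) {k : ℝ} (hk : 0 < k) :
    StrictConvexOn ℝ s (fun x => k * f x) := by
  refine ⟨hf.1, fun x hx y hy hxy a b ha hb hab => ?_⟩
  have := mul_lt_mul_of_pos_left (hf.2 hx hy hxy ha hb hab) hk
  simp only [smul_eq_mul] at this ⊢
  linarith

section LogSumExp

variable {ι : Type*} [Fintype ι]

theorem convexOn_log_sum_exp : ConvexOn ℝ univ (fun u : ι → ℝ => log (∑ i, exp (u i))) := by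
  rcases isEmpty_or_nonempty ι with _ | _
  · simpa using convexOn_const (0 : ℝ) convex_univ
  refine convexOn_iff_forall_pos.2 ⟨convex_univ, fun u _ v _ a b ha hb hab => ?_⟩
  have hpos : ∀ w : ι → ℝ, 0 < ∑ i, exp (w i) := fun w =>
    Finset.sum_pos (fun i _ => exp_pos _) Finset.univ_nonempty
  have hpq : a⁻¹.HolderConjugate b⁻¹ :=
    Real.holderConjugate_iff.2 ⟨one_lt_inv_iff₀.2 ⟨ha, by linarith⟩, by simpa using hab⟩
  have holder := Real.inner_le_Lp_mul_Lq_of_nonneg Finset.univ hpq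
    (f := fun i => exp (a * u i)) (g := fun i => exp (b * v i))
    (fun i _ => (exp_pos _).le) (fun i _ => (exp_pos _).le)
  simp only [← exp_mul, one_div, inv_inv, mul_comm _ a⁻¹, mul_comm _ b⁻¹, ← mul_assoc,
    inv_mul_cancel₀ ha.ne', inv_mul_cancel₀ hb.ne', one_mul, ← exp_add] at holder
  simp only [Pi.add_apply, Pi.smul_apply, smul_eq_mul]
  calc log (∑ i, exp (a * u i + b * v i))
      ≤ log ((∑ i, exp (u i)) ^ a * (∑ i, exp (v i)) ^ b) := log_le_log (hpos _) holder
    _ = a * log (∑ i, exp (u i)) + b * log (∑ i, exp (v i)) := by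
      rw [log_mul (by positivity) (by positivity), log_rpow (hpos u), log_rpow (hpos v)]

theorem StrictConvexOn.log_sum_exp [Nonempty ι] {E : Type*} [AddCommMonoid E] [Module ℝ E]
    {s : Set E} {f : ι → E → ℝ} (hf : ∀ i, StrictConvexOn ℝ s (f i)) :
    StrictConvexOn ℝ s (fun x => log (∑ i, exp (f i x))) := by
  refine ⟨(hf (Classical.arbitrary ι)).1, fun x hx y hy hxy a b ha hb hab => ?_⟩
  calc log (∑ i, exp (f i (a • x + b • y)))
      < log (∑ i, exp (a * f i x + b * f i y)) := by
        refine log_lt_log (Finset.sum_pos (fun i _ => exp_pos _) Finset.univ_nonempty) ?_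
        exact Finset.sum_lt_sum_of_nonempty Finset.univ_nonempty fun i _ =>
          exp_lt_exp.2 ((hf i).2 hx hy hxy ha hb hab)
    _ ≤ a * log (∑ i, exp (f i x)) + b * log (∑ i, exp (f i y)) :=
        convexOn_log_sum_exp.2 (mem_univ fun i => f i x) (mem_univ fun i => f i y) ha.le hb.le hab

end LogSumExp

lemma strictConvexOn_sebFi (c : Fin m → EuclideanSpace ℝ (Fin n)) (r : Fin m → ℝ) {μ : ℝ}
    (hμ : μ ≠ 0) (i : Fin m) : StrictConvexOn ℝ univ (fun x => sebFi c r μ x i) := by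
  exact (strictConvexOn_sqrt_norm_sub_sq_add_sq (c i) hμ).add_const (r i)

theorem stmt_2_general (n m : ℕ) (hm : 1 ≤ m) (c : Fin m → EuclideanSpace ℝ (Fin n))
    (r : Fin m → ℝ) (μ : ℝ) (hμ : 0 < μ) :
    StrictConvexOn ℝ (Set.univ : Set (EuclideanSpace ℝ (Fin n))) (sebFmu c r μ) := by
  have : Nonempty (Fin m) := ⟨⟨0, hm⟩⟩
  have hscaled : ∀ i, StrictConvexOn ℝ univ (fun x => sebFi c r μ x i / μ) := fun i => by
    simpa [div_eq_inv_mul] using (strictConvexOn_sebFi c r hμ.ne' i).const_mul (inv_pos.2 hμ)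
  exact (StrictConvexOn.log_sum_exp hscaled).const_mul hμ

theorem stmt_2 (n m : ℕ) (hm : 1 ≤ m) (c : Fin m → EuclideanSpace ℝ (Fin n))
    (r : Fin m → ℝ) (hr : ∀ i, 0 ≤ r i) (μ : ℝ) (hμ : 0 < μ) :
    StrictConvexOn ℝ (Set.univ : Set (EuclideanSpace ℝ (Fin n))) (sebFmu c r μ) :=
  stmt_2_general n m hm c r μ hμ
end

section
/- For every μ > 0, the function x ↦ f(x;μ) is differentiable at every x ∈ ℝ^n, and its gradient at x equals Σ_{i=1}^m λ_i(x;μ) · (x − c_i)/g_i(x;μ). -/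
open Real Filter

section SqrtNormSq

variable {E : Type*} [NormedAddCommGroup E] [InnerProductSpace ℝ E]

theorem hasFDerivAt_sqrt_norm_sub_sq_add_sq (a : E) {μ : ℝ} (hμ : μ ≠ 0) (x : E) :
    HasFDerivAt (fun y => √(‖y - a‖ ^ 2 + μ ^ 2))
      ((√(‖x - a‖ ^ 2 + μ ^ 2))⁻¹ • innerSL ℝ (x - a)) x := by
  have hpos : 0 < ‖x - a‖ ^ 2 + μ ^ 2 := by positivity
  have hnormSq := (((hasFDerivAt_id x).sub_const a).norm_sq).add_const (μ ^ 2)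
  refine (hnormSq.sqrt hpos.ne').congr_fderiv ?_
  ext y
  simp only [id_eq, one_div, mul_inv_rev, map_sub, ContinuousLinearMap.comp_id, smul_apply,
    sub_apply, coe_innerSL_apply, nsmul_eq_mul, Nat.cast_ofNat, smul_eq_mul]
  ring

end SqrtNormSq

section LogSumExp

variable {E ι : Type*} [NormedAddCommGroup E] [NormedSpace ℝ E] [Fintype ι] [Nonempty ι]

theorem HasFDerivAt.mul_log_sum_exp_div {f : ι → E → ℝ} {f' : ι → E →L[ℝ] ℝ} {x : E} {μ : ℝ}
    (hμ : μ ≠ 0) (hf : ∀ i, HasFDerivAt (f i) (f' i) x) :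
    HasFDerivAt (fun y => μ * Real.log (∑ i, Real.exp (f i y / μ)))
      (∑ i, (Real.exp (f i x / μ) / ∑ j, Real.exp (f j x / μ)) • f' i) x := by
  have hS : 0 < ∑ j, Real.exp (f j x / μ) :=
    Finset.sum_pos (fun j _ => Real.exp_pos _) Finset.univ_nonempty
  have hdiv : ∀ i, HasFDerivAt (fun y => f i y / μ) (μ⁻¹ • f' i) x := fun i =>
    (hf i).mul_const μ⁻¹
  have hsum := HasFDerivAt.fun_sum (u := Finset.univ) fun i _ => (hdiv i).exp
  refine ((hsum.log hS.ne').const_mul μ).congr_fderiv ?_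
  simp only [Finset.smul_sum, smul_smul]
  refine Finset.sum_congr rfl fun i _ => ?_
  congr 1
  field_simp

end LogSumExp

theorem stmt_3_general (n m : ℕ) (hm : 1 ≤ m) (c : Fin m → EuclideanSpace ℝ (Fin n))
    (r : Fin m → ℝ) (μ : ℝ) (hμ : 0 < μ)
    (x : EuclideanSpace ℝ (Fin n)) :
    HasGradientAt (sebFmu c r μ) (sebGrad c r μ x) x := by
  have : Nonempty (Fin m) := ⟨⟨0, hm⟩⟩
  have hfi : ∀ i, HasFDerivAt (fun y => sebFi c r μ y i)
      ((sebG c μ x i)⁻¹ • innerSL ℝ (x - c i)) x := fun i =>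
    (hasFDerivAt_sqrt_norm_sub_sq_add_sq (c i) hμ.ne' x).add_const (r i)
  rw [hasGradientAt_iff_hasFDerivAt]
  refine (HasFDerivAt.mul_log_sum_exp_div hμ.ne' hfi).congr_fderiv ?_
  ext y
  simp [sebGrad, sebLam, sebGradI]

theorem stmt_3 (n m : ℕ) (hm : 1 ≤ m) (c : Fin m → EuclideanSpace ℝ (Fin n))
    (r : Fin m → ℝ) (hr : ∀ i, 0 ≤ r i) (μ : ℝ) (hμ : 0 < μ)
    (x : EuclideanSpace ℝ (Fin n)) :
    HasGradientAt (sebFmu c r μ) (sebGrad c r μ x) x :=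
  stmt_3_general n m hm c r μ hμ x
end

section
/- For every μ > 0 and every x ∈ ℝ^n, the gradient of the log-exponential aggregation function has norm strictly less than one: ‖Σ_{i=1}^m λ_i(x;μ) · (x − c_i)/g_i(x;μ)‖ < 1. -/
open Real Filter

section

variable {n m : ℕ} (c : Fin m → EuclideanSpace ℝ (Fin n)) (r : Fin m → ℝ) {μ : ℝ}
  (x : EuclideanSpace ℝ (Fin n))

theorem norm_sub_lt_sebG (hμ : μ ≠ 0) (i : Fin m) : ‖x - c i‖ < sebG c μ x i :=
  (Real.lt_sqrt (norm_nonneg _)).2 (lt_add_of_pos_right _ (by positivity))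

theorem norm_sebGradI_lt_one (hμ : μ ≠ 0) (i : Fin m) : ‖sebGradI c μ x i‖ < 1 := by
  have hlt := norm_sub_lt_sebG c x hμ i
  have hpos : 0 < sebG c μ x i := (norm_nonneg _).trans_lt hlt
  rw [sebGradI, norm_smul, norm_inv, Real.norm_of_nonneg hpos.le, inv_mul_lt_one₀ hpos]
  exact hlt

theorem sebLam_nonneg (i : Fin m) : 0 ≤ sebLam c r μ x i :=
  div_nonneg (Real.exp_nonneg _) (Finset.sum_nonneg fun _ _ => Real.exp_nonneg _)

theorem sum_sebLam [Nonempty (Fin m)] : ∑ i, sebLam c r μ x i = 1 := by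
  simp only [sebLam, ← Finset.sum_div]
  exact div_self (Finset.sum_pos (fun _ _ => Real.exp_pos _) Finset.univ_nonempty).ne'

end

theorem stmt_4_general (n m : ℕ) (hm : 1 ≤ m) (c : Fin m → EuclideanSpace ℝ (Fin n))
    (r : Fin m → ℝ) (μ : ℝ) (hμ : 0 < μ)
    (x : EuclideanSpace ℝ (Fin n)) :
    ‖sebGrad c r μ x‖ < 1 := by
  have : Nonempty (Fin m) := ⟨⟨0, hm⟩⟩
  exact mem_ball_zero_iff.1 <| (convex_ball (0 : EuclideanSpace ℝ (Fin n)) 1).sum_mem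
    (fun i _ => sebLam_nonneg c r x i) (sum_sebLam c r x)
    (fun i _ => mem_ball_zero_iff.2 (norm_sebGradI_lt_one c x hμ.ne' i))

theorem stmt_4 (n m : ℕ) (hm : 1 ≤ m) (c : Fin m → EuclideanSpace ℝ (Fin n))
    (r : Fin m → ℝ) (hr : ∀ i, 0 ≤ r i) (μ : ℝ) (hμ : 0 < μ)
    (x : EuclideanSpace ℝ (Fin n)) :
    ‖sebGrad c r μ x‖ < 1 :=
  stmt_4_general n m hm c r μ hμ x
end

section
/- For every ε₃ ∈ (0,1], μ ∈ (0,1], and x ∈ ℝ^n, the truncated log-exponential function satisfies f(x) < f̃(x;μ) ≤ f(x;μ) ≤ f(x) + μ(1 + ln m). -/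
open Real Filter

theorem stmt_7 (n m : ℕ) (hm : 1 ≤ m) (c : Fin m → EuclideanSpace ℝ (Fin n))
    (r : Fin m → ℝ) (hr : ∀ i, 0 ≤ r i) (ε₃ μ : ℝ)
    (hε₃ : 0 < ε₃) (hε₃1 : ε₃ ≤ 1) (hμ : 0 < μ) (hμ1 : μ ≤ 1)
    (x : EuclideanSpace ℝ (Fin n)) :
    sebF c r x < sebFmuT c r μ (μ * ε₃ / (10 * m)) x ∧
      sebFmuT c r μ (μ * ε₃ / (10 * m)) x ≤ sebFmu c r μ x ∧
        sebFmu c r μ x ≤ sebF c r x + μ * (1 + Real.log m) := by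
  classical
  haveI : Nonempty (Fin m) := Fin.pos_iff_nonempty.mp hm
  have hmR : (1 : ℝ) ≤ (m : ℝ) := by exact_mod_cast hm
  have hmpos : (0 : ℝ) < (m : ℝ) := lt_of_lt_of_le one_pos hmR
  set ε : ℝ := μ * ε₃ / (10 * m) with hεdef
  set E : Fin m → ℝ := fun i => Real.exp (sebFi c r μ x i / μ) with hE
  have hEpos : ∀ i, 0 < E i := fun i => Real.exp_pos _
  obtain ⟨i₀, hi₀⟩ := Finite.exists_max (sebFi c r μ x)
  have hsum_pos : 0 < ∑ j : Fin m, E j :=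
    Finset.sum_pos (fun j _ => hEpos j) Finset.univ_nonempty
  -- sum ≤ m * E i₀
  have hsum_le : ∑ j : Fin m, E j ≤ (m : ℝ) * E i₀ := by
    calc ∑ j : Fin m, E j ≤ ∑ _j : Fin m, E i₀ :=
          Finset.sum_le_sum fun j _ => Real.exp_le_exp.mpr
            (div_le_div_of_nonneg_right (hi₀ j) hμ.le)
      _ = (m : ℝ) * E i₀ := by simp [mul_comm]
  -- λ_{i₀} ≥ 1/m ≥ ε, hence i₀ ∈ S
  have hεle : ε ≤ 1 / (m : ℝ) := by
    rw [hεdef, div_le_div_iff₀ (by positivity) hmpos]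
    nlinarith [mul_le_mul hμ1 hε₃1 hε₃.le zero_le_one, hmR]
  have hi₀S : i₀ ∈ sebS c r μ ε x := by
    have hlam : (1 : ℝ) / m ≤ sebLam c r μ x i₀ := by
      rw [sebLam, div_le_div_iff₀ hmpos hsum_pos]
      calc (1 : ℝ) * ∑ j : Fin m, E j ≤ (m : ℝ) * E i₀ := by
            rw [one_mul]; exact hsum_le
        _ = Real.exp (sebFi c r μ x i₀ / μ) * m := by rw [mul_comm]
    simp only [sebS, Finset.mem_filter, Finset.mem_univ, true_and]
    exact le_trans hεle hlam
  have hSsum_pos : 0 < ∑ j ∈ sebS c r μ ε x, E j :=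
    Finset.sum_pos (fun j _ => hEpos j) ⟨i₀, hi₀S⟩
  -- First inequality: sebF < sebFmuT
  have h1 : sebF c r x < sebFmuT c r μ ε x := by
    obtain ⟨j₀, hj₀⟩ := Finite.exists_max (fun j => ‖x - c j‖ + r j)
    have hF_le : sebF c r x ≤ ‖x - c j₀‖ + r j₀ := ciSup_le hj₀
    have hlt : ‖x - c j₀‖ + r j₀ < sebFi c r μ x j₀ := by
      have : ‖x - c j₀‖ < sebG c μ x j₀ := by
        rw [sebG]
        have := Real.sqrt_lt_sqrt (by positivity : (0:ℝ) ≤ ‖x - c j₀‖ ^ 2)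
          (by nlinarith : ‖x - c j₀‖ ^ 2 < ‖x - c j₀‖ ^ 2 + μ ^ 2)
        rwa [Real.sqrt_sq (norm_nonneg _)] at this
      rw [sebFi]; linarith
    have hFi : sebFi c r μ x i₀ ≤ sebFmuT c r μ ε x := by
      rw [sebFmuT]
      have hle : E i₀ ≤ ∑ j ∈ sebS c r μ ε x, E j :=
        Finset.single_le_sum (fun j _ => (hEpos j).le) hi₀S
      have := Real.log_le_log (hEpos i₀) hle
      rw [hE] at this
      simp only [Real.log_exp] at this
      calc sebFi c r μ x i₀ = μ * (sebFi c r μ x i₀ / μ) := by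
            field_simp
        _ ≤ μ * Real.log (∑ j ∈ sebS c r μ ε x, Real.exp (sebFi c r μ x j / μ)) :=
            mul_le_mul_of_nonneg_left this hμ.le
    calc sebF c r x < sebFi c r μ x j₀ := lt_of_le_of_lt hF_le hlt
      _ ≤ sebFi c r μ x i₀ := hi₀ j₀
      _ ≤ sebFmuT c r μ ε x := hFi
  -- Second inequality
  have h2 : sebFmuT c r μ ε x ≤ sebFmu c r μ x := by
    rw [sebFmuT, sebFmu]
    refine mul_le_mul_of_nonneg_left (Real.log_le_log hSsum_pos ?_) hμ.le
    exact Finset.sum_le_sum_of_subset_of_nonneg (Finset.subset_univ _)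
      (fun j _ _ => (hEpos j).le)
  -- Third inequality
  have h3 : sebFmu c r μ x ≤ sebF c r x + μ * (1 + Real.log m) := by
    have hbdd : BddAbove (Set.range fun j => ‖x - c j‖ + r j) :=
      (Set.finite_range _).bddAbove
    have hkey : ∀ j, sebFi c r μ x j ≤ sebF c r x + μ := by
      intro j
      have h1' : sebG c μ x j ≤ ‖x - c j‖ + μ := by
        rw [sebG]
        have : ‖x - c j‖ ^ 2 + μ ^ 2 ≤ (‖x - c j‖ + μ) ^ 2 := by
          nlinarith [norm_nonneg (x - c j), hμ.le]
        calc Real.sqrt (‖x - c j‖ ^ 2 + μ ^ 2) ≤ Real.sqrt ((‖x - c j‖ + μ) ^ 2) :=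
              Real.sqrt_le_sqrt this
          _ = ‖x - c j‖ + μ := Real.sqrt_sq (by positivity)
      have h2' : ‖x - c j‖ + r j ≤ sebF c r x := le_ciSup hbdd j
      rw [sebFi]; linarith
    have hsum_le2 : ∑ j : Fin m, E j ≤ (m : ℝ) * Real.exp ((sebF c r x + μ) / μ) := by
      calc ∑ j : Fin m, E j ≤ ∑ _j : Fin m, Real.exp ((sebF c r x + μ) / μ) :=
            Finset.sum_le_sum fun j _ => Real.exp_le_exp.mpr
              (div_le_div_of_nonneg_right (hkey j) hμ.le)
        _ = (m : ℝ) * Real.exp ((sebF c r x + μ) / μ) := by simp [mul_comm]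
    rw [sebFmu]
    have hlog := Real.log_le_log hsum_pos hsum_le2
    rw [Real.log_mul (ne_of_gt hmpos) (Real.exp_ne_zero _), Real.log_exp] at hlog
    calc μ * Real.log (∑ i : Fin m, Real.exp (sebFi c r μ x i / μ))
        ≤ μ * (Real.log m + (sebF c r x + μ) / μ) :=
          mul_le_mul_of_nonneg_left hlog hμ.le
      _ = sebF c r x + μ * (1 + Real.log m) := by field_simp; ring
  exact ⟨h1, h2, h3⟩
end

section
/- For every ε₃ ∈ (0,1], μ ∈ (0,1], and x ∈ ℝ^n, the truncation error of the function value satisfies f(x;μ) − f̃(x;μ) ≤ μ²ε₃/9. -/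
open Real Filter

theorem stmt_8 (n m : ℕ) (hm : 1 ≤ m) (c : Fin m → EuclideanSpace ℝ (Fin n))
    (r : Fin m → ℝ) (hr : ∀ i, 0 ≤ r i) (ε₃ μ : ℝ)
    (hε₃ : 0 < ε₃) (hε₃1 : ε₃ ≤ 1) (hμ : 0 < μ) (hμ1 : μ ≤ 1)
    (x : EuclideanSpace ℝ (Fin n)) :
    sebFmu c r μ x - sebFmuT c r μ (μ * ε₃ / (10 * m)) x ≤ μ ^ 2 * ε₃ / 9 := by
  have hm0 : (0:ℝ) < m := by exact_mod_cast Nat.lt_of_lt_of_le Nat.zero_lt_one hm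
  set ε : ℝ := μ * ε₃ / (10 * m) with hεdef
  have hεpos : 0 < ε := by positivity
  set E : Fin m → ℝ := fun i => Real.exp (sebFi c r μ x i / μ) with hE
  have hEpos : ∀ i, 0 < E i := fun i => Real.exp_pos _
  set T : ℝ := ∑ i, E i with hT
  have hne : (Finset.univ : Finset (Fin m)).Nonempty := ⟨⟨0, hm⟩, Finset.mem_univ _⟩
  have hTpos : 0 < T := Finset.sum_pos (fun i _ => hEpos i) hne
  set S : Finset (Fin m) := sebS c r μ ε x with hS
  have hlam : ∀ i, sebLam c r μ x i = E i / T := fun i => rfl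
  have hsum : ∑ i, sebLam c r μ x i = 1 := by
    simp only [hlam]
    rw [← Finset.sum_div, ← hT, div_self hTpos.ne']
  have hεlt : ε < 1 / m := by
    have hμε : μ * ε₃ ≤ 1 := mul_le_one₀ hμ1 hε₃.le hε₃1
    rw [hεdef, div_lt_div_iff₀ (by positivity) hm0]
    nlinarith
  obtain ⟨i0, -, hi0⟩ := Finset.exists_le_of_sum_le (s := (Finset.univ : Finset (Fin m)))
      (f := fun _ : Fin m => 1 / (m:ℝ)) (g := sebLam c r μ x) hne (by
        rw [hsum, Finset.sum_const, Finset.card_univ, Fintype.card_fin, nsmul_eq_mul]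
        rw [mul_one_div, div_self hm0.ne'])
  have hi0S : i0 ∈ S := by
    rw [hS, sebS, Finset.mem_filter]
    exact ⟨Finset.mem_univ _, le_of_lt (lt_of_lt_of_le hεlt hi0)⟩
  set TS : ℝ := ∑ i ∈ S, E i with hTS
  have hTSpos : 0 < TS := Finset.sum_pos (fun i _ => hEpos i) ⟨i0, hi0S⟩
  have hsplit : TS + ∑ i ∈ Sᶜ, E i = T := Finset.sum_add_sum_compl S E
  have hcompl : ∑ i ∈ Sᶜ, E i ≤ μ * ε₃ / 10 * T := by
    calc ∑ i ∈ Sᶜ, E i ≤ ∑ _i ∈ Sᶜ, ε * T := by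
          refine Finset.sum_le_sum fun i hi => ?_
          rw [Finset.mem_compl, hS, sebS, Finset.mem_filter] at hi
          push_neg at hi
          have := hi (Finset.mem_univ i)
          rw [hlam, div_lt_iff₀ hTpos] at this
          exact this.le
      _ = Sᶜ.card * (ε * T) := by rw [Finset.sum_const, nsmul_eq_mul]
      _ ≤ m * (ε * T) := by
          apply mul_le_mul_of_nonneg_right _ (by positivity)
          exact_mod_cast Finset.card_le_univ Sᶜ |>.trans (by simp)
      _ = μ * ε₃ / 10 * T := by rw [hεdef]; field_simp
  have hTSlb : (1 - μ * ε₃ / 10) * T ≤ TS := by nlinarith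
  have hμε : μ * ε₃ ≤ 1 := mul_le_one₀ hμ1 hε₃.le hε₃1
  have h910 : (9:ℝ)/10 * T ≤ TS := by
    nlinarith [mul_nonneg (by linarith : (0:ℝ) ≤ 1 - μ * ε₃) hTpos.le]
  have hratio : Real.log (T / TS) ≤ μ * ε₃ / 9 := by
    have h1 : Real.log (T / TS) ≤ T / TS - 1 :=
      Real.log_le_sub_one_of_pos (by positivity)
    have h2 : T / TS - 1 = (T - TS) / TS := by field_simp
    have h3 : (T - TS) / TS ≤ (μ * ε₃ / 10 * T) / ((9:ℝ)/10 * T) := by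
      apply div_le_div₀ (by positivity) (by nlinarith) (by positivity) h910
    have h4 : (μ * ε₃ / 10 * T) / ((9:ℝ)/10 * T) = μ * ε₃ / 9 := by
      field_simp
    linarith
  have hgoal : sebFmu c r μ x - sebFmuT c r μ ε x = μ * Real.log (T / TS) := by
    rw [sebFmu, sebFmuT, ← mul_sub, Real.log_div hTpos.ne' hTSpos.ne']
  rw [hgoal]
  calc μ * Real.log (T / TS) ≤ μ * (μ * ε₃ / 9) :=
        mul_le_mul_of_nonneg_left hratio hμ.le
    _ = μ ^ 2 * ε₃ / 9 := by ring
end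

section
/- For every ε₃ ∈ (0,1], μ ∈ (0,1], and x ∈ ℝ^n, the truncation error of the gradient satisfies ‖∇f(x;μ) − ∇f̃(x;μ)‖ ≤ μ·ε₃/5, where ∇f(x;μ) = Σ_{i=1}^m λ_i(x;μ)(x − c_i)/g_i(x;μ) and ∇f̃(x;μ) = Σ_{i∈S(x;μ,ε)} λ̃_i(x;μ)(x − c_i)/g_i(x;μ). -/
open Real Filter

theorem stmt_9 (n m : ℕ) (hm : 1 ≤ m) (c : Fin m → EuclideanSpace ℝ (Fin n))
    (r : Fin m → ℝ) (hr : ∀ i, 0 ≤ r i) (ε₃ μ : ℝ)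
    (hε₃ : 0 < ε₃) (hε₃1 : ε₃ ≤ 1) (hμ : 0 < μ) (hμ1 : μ ≤ 1)
    (x : EuclideanSpace ℝ (Fin n)) :
    ‖sebGrad c r μ x - sebGradT c r μ (μ * ε₃ / (10 * m)) x‖ ≤ μ * ε₃ / 5 := by
  have hm0 : (0:ℝ) < m := by exact_mod_cast Nat.lt_of_lt_of_le Nat.zero_lt_one hm
  set ε := μ * ε₃ / (10 * m) with hεdef
  have hεpos : 0 < ε := by positivity
  have hε1m : ε ≤ 1 / (m:ℝ) := by
    rw [hεdef, div_le_div_iff₀ (by positivity) hm0]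
    nlinarith [mul_le_mul hμ1 hε₃1 hε₃.le zero_le_one, hm0]
  set w : Fin m → ℝ := fun i => Real.exp (sebFi c r μ x i / μ) with hw
  have hwpos : ∀ i, 0 < w i := fun i => Real.exp_pos _
  set T : ℝ := ∑ j, w j with hT
  have hTpos : 0 < T := Finset.sum_pos (fun i _ => hwpos i) ⟨⟨0, hm⟩, Finset.mem_univ _⟩
  have hlam : ∀ i, sebLam c r μ x i = w i / T := fun i => rfl
  set S := sebS c r μ ε x with hS
  have hmemS : ∀ i, i ∈ S ↔ ε ≤ w i / T := by
    intro i
    rw [hS, sebS, Finset.mem_filter, hlam]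
    simp
  -- S is nonempty
  obtain ⟨i₀, -, hi₀⟩ := Finset.exists_max_image Finset.univ w ⟨⟨0, hm⟩, Finset.mem_univ _⟩
  have hi₀S : i₀ ∈ S := by
    rw [hmemS]
    have hTle : T ≤ m * w i₀ := by
      calc T ≤ ∑ _j : Fin m, w i₀ :=
            Finset.sum_le_sum (fun j _ => hi₀ j (Finset.mem_univ j))
        _ = m * w i₀ := by simp [Finset.sum_const, mul_comm]
    calc ε ≤ 1 / (m:ℝ) := hε1m
      _ ≤ w i₀ / T := by
          rw [div_le_div_iff₀ hm0 hTpos]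
          nlinarith [hwpos i₀]
  set TS : ℝ := ∑ j ∈ S, w j with hTS
  have hTSpos : 0 < TS := Finset.sum_pos (fun i _ => hwpos i) ⟨i₀, hi₀S⟩
  have hTSle : TS ≤ T :=
    Finset.sum_le_sum_of_subset_of_nonneg (Finset.subset_univ S) (fun i _ _ => (hwpos i).le)
  have hlamT : ∀ i, sebLamT c r μ ε x i = w i / TS := fun i => rfl
  -- unit directions
  have hvle : ∀ i, ‖sebGradI c μ x i‖ ≤ 1 := by
    intro i
    have hg : 0 < sebG c μ x i := Real.sqrt_pos.mpr (by positivity)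
    have hxg : ‖x - c i‖ ≤ sebG c μ x i := by
      have h := Real.sqrt_le_sqrt (show ‖x - c i‖ ^ 2 ≤ ‖x - c i‖ ^ 2 + μ ^ 2 by
        nlinarith [sq_nonneg μ])
      rwa [Real.sqrt_sq (norm_nonneg _)] at h
    rw [sebGradI, norm_smul, norm_inv, Real.norm_eq_abs, abs_of_pos hg, inv_mul_le_iff₀ hg,
      mul_one]
    exact hxg
  -- the coefficient difference
  set d : Fin m → ℝ := fun i => w i / T - (if i ∈ S then w i / TS else 0) with hd
  have key : sebGrad c r μ x - sebGradT c r μ ε x = ∑ i : Fin m, d i • sebGradI c μ x i := by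
    have h2 : sebGradT c r μ ε x
        = ∑ i : Fin m, (if i ∈ S then w i / TS else 0) • sebGradI c μ x i := by
      rw [sebGradT]
      rw [show (∑ i : Fin m, (if i ∈ S then w i / TS else 0) • sebGradI c μ x i)
          = ∑ i : Fin m, (if i ∈ S then (w i / TS) • sebGradI c μ x i else 0) from
        Finset.sum_congr rfl (fun i _ => by split <;> simp)]
      rw [Finset.sum_ite_mem, Finset.univ_inter]
      exact Finset.sum_congr rfl (fun i _ => by rw [hlamT])
    rw [sebGrad, h2, ← Finset.sum_sub_distrib]
    refine Finset.sum_congr rfl (fun i _ => ?_)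
    rw [hd, hlam, sub_smul]
  rw [key]
  have step1 : ‖∑ i : Fin m, d i • sebGradI c μ x i‖ ≤ ∑ i : Fin m, |d i| := by
    refine (norm_sum_le _ _).trans (Finset.sum_le_sum fun i _ => ?_)
    rw [norm_smul, Real.norm_eq_abs]
    exact mul_le_of_le_one_right (abs_nonneg _) (hvle i)
  -- split over S and its complement
  have hsplit : ∑ i ∈ Sᶜ, |d i| + ∑ i ∈ S, |d i| = ∑ i : Fin m, |d i| :=
    Finset.sum_compl_add_sum S _
  have hcompl_d : ∀ i ∈ Sᶜ, |d i| = w i / T := by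
    intro i hi
    rw [Finset.mem_compl] at hi
    rw [hd]
    simp only [if_neg hi, sub_zero]
    exact abs_of_pos (div_pos (hwpos i) hTpos)
  have hcompl_le : ∑ i ∈ Sᶜ, w i / T ≤ m * ε := by
    calc ∑ i ∈ Sᶜ, w i / T ≤ ∑ _i ∈ Sᶜ, ε := by
          refine Finset.sum_le_sum fun i hi => ?_
          rw [Finset.mem_compl, hmemS] at hi
          exact (not_le.mp hi).le
      _ = (Sᶜ.card : ℝ) * ε := by rw [Finset.sum_const, nsmul_eq_mul]
      _ ≤ m * ε := by
          refine mul_le_mul_of_nonneg_right ?_ hεpos.le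
          exact_mod_cast (Finset.card_le_univ _).trans_eq (by simp)
  have hS_d : ∀ i ∈ S, |d i| = w i / TS - w i / T := by
    intro i hi
    rw [hd]
    simp only [if_pos hi]
    rw [abs_sub_comm]
    refine abs_of_nonneg (sub_nonneg.mpr ?_)
    exact div_le_div_of_nonneg_left (hwpos i).le hTSpos hTSle
  have hSsum : ∑ i ∈ S, (w i / TS - w i / T) = 1 - TS / T := by
    rw [Finset.sum_sub_distrib, ← Finset.sum_div, ← Finset.sum_div, ← hTS,
      div_self hTSpos.ne']
  have hone : ∑ i ∈ Sᶜ, w i / T + TS / T = 1 := by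
    have h := Finset.sum_compl_add_sum S (fun i => w i / T)
    have h2 : ∑ i ∈ S, w i / T = TS / T := by rw [← Finset.sum_div]
    have h3 : ∑ i : Fin m, w i / T = 1 := by
      rw [← Finset.sum_div, ← hT, div_self hTpos.ne']
    linarith [h, h2, h3]
  have hfinal : ∑ i : Fin m, |d i| ≤ 2 * (m * ε) := by
    rw [← hsplit, Finset.sum_congr rfl hcompl_d, Finset.sum_congr rfl hS_d, hSsum]
    have h1 : (1 : ℝ) - TS / T = ∑ i ∈ Sᶜ, w i / T := by linarith
    rw [h1]
    linarith
  refine step1.trans (le_of_le_of_eq hfinal ?_)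
  rw [hεdef]
  field_simp
  ring
end

section
/- For every μ > 0, every c ∈ ℝ^n, and every x ∈ ℝ^n, the matrix ∇²f_i(x;μ) = (1/g) I_n − (x − c)(x − c)ᵀ/g³ with g = √(‖x − c‖² + μ²) is positive semidefinite and has operator norm (induced by the Euclidean norm) at most 1/μ; its eigenvalues are 1/g with multiplicity n − 1 and μ²/g³ with multiplicity 1 (when x ≠ c). -/
/-!
With `g = √(‖x - c‖² + μ²)` and `v = x - c`, the matrix is the rank-one update `a • 1 - b • v vᵀ`
with `a = 1/g`, `b = 1/g³` and `b ‖v‖² = (g² - μ²)/g³ ≤ a`. By Cauchy–Schwarz its quadratic form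
is at least `(a - b ‖v‖²) ‖y‖² ≥ 0`, and
`‖(a • 1 - b • v vᵀ) y‖² = a² ‖y‖² - b ⟪v, y⟫² (2a - b ‖v‖²) ≤ a² ‖y‖²`, so its norm is at most
`1/g ≤ 1/μ`. The characteristic polynomial is that of the rank-one matrix `-b • v vᵀ`,
namely `X ^ n + b ‖v‖² X ^ (n - 1)`, shifted by `a`.
-/

open Real

noncomputable section

/-- The matrix `(1/g) I_n − (x − c)(x − c)ᵀ/g³` with `g = √(‖x − c‖² + μ²)`. -/
def hessMat (n : ℕ) (μ : ℝ) (c x : EuclideanSpace ℝ (Fin n)) : Matrix (Fin n) (Fin n) ℝ :=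
  (Real.sqrt (‖x - c‖ ^ 2 + μ ^ 2))⁻¹ • (1 : Matrix (Fin n) (Fin n) ℝ)
    - ((Real.sqrt (‖x - c‖ ^ 2 + μ ^ 2)) ^ 3)⁻¹ •
        Matrix.vecMulVec (fun j => (x - c) j) (fun j => (x - c) j)

end

open Matrix Polynomial

variable {ι : Type*} [Fintype ι]

theorem Matrix.charpoly_smul_one_sub_vecMulVec [DecidableEq ι] {R : Type*} [CommRing R]
    [Nonempty ι] (a : R) (u v : ι → R) :
    (a • (1 : Matrix ι ι R) - vecMulVec u v).charpoly =
      (X - C a) ^ (Fintype.card ι - 1) * (X - C (a - u ⬝ᵥ v)) := by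
  have hshift : a • (1 : Matrix ι ι R) - vecMulVec u v = vecMulVec (-u) v - scalar ι (-a) := by
    ext i j
    by_cases h : i = j <;> simp [h, vecMulVec_apply]; ring
  obtain ⟨k, hk⟩ := Nat.exists_eq_succ_of_ne_zero (Fintype.card_ne_zero (α := ι))
  rw [hshift, charpoly_sub_scalar, charpoly_vecMulVec, hk]
  simp [pow_succ, smul_eq_C_mul]
  ring

theorem Matrix.sq_dotProduct_le (v y : ι → ℝ) : (v ⬝ᵥ y) ^ 2 ≤ (v ⬝ᵥ v) * (y ⬝ᵥ y) := by
  have := real_inner_mul_inner_self_le (WithLp.toLp 2 v) (WithLp.toLp 2 y)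
  simp only [EuclideanSpace.inner_toLp_toLp, star_trivial] at this
  rwa [sq, dotProduct_comm v y]

theorem EuclideanSpace.real_norm_sq_eq_dotProduct (w : EuclideanSpace ℝ ι) :
    ‖w‖ ^ 2 = w.ofLp ⬝ᵥ w.ofLp := by
  rw [← real_inner_self_eq_norm_sq, EuclideanSpace.inner_eq_star_dotProduct, star_trivial]

theorem Matrix.norm_toEuclideanCLM_le [DecidableEq ι] {A : Matrix ι ι ℝ} {C : ℝ} (hC : 0 ≤ C)
    (h : ∀ y, (A *ᵥ y) ⬝ᵥ (A *ᵥ y) ≤ C ^ 2 * (y ⬝ᵥ y)) :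
    ‖toEuclideanCLM (𝕜 := ℝ) A‖ ≤ C := by
  refine ContinuousLinearMap.opNorm_le_bound _ hC fun z => ?_
  rw [← sq_le_sq₀ (norm_nonneg _) (by positivity), mul_pow,
    EuclideanSpace.real_norm_sq_eq_dotProduct, EuclideanSpace.real_norm_sq_eq_dotProduct,
    ofLp_toEuclideanCLM]
  exact h z.ofLp

theorem Matrix.smul_one_sub_smul_vecMulVec_mulVec [DecidableEq ι] (a b : ℝ) (v y : ι → ℝ) :
    (a • (1 : Matrix ι ι ℝ) - b • vecMulVec v v) *ᵥ y = a • y - (b * (v ⬝ᵥ y)) • v := by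
  simp [sub_mulVec, smul_mulVec, vecMulVec_mulVec, mul_smul]

section RankOneUpdate

variable [DecidableEq ι] {a b : ℝ} {v : ι → ℝ}

theorem Matrix.posSemidef_smul_one_sub_smul_vecMulVec (hb : 0 ≤ b) (h : b * (v ⬝ᵥ v) ≤ a) :
    (a • (1 : Matrix ι ι ℝ) - b • vecMulVec v v).PosSemidef := by
  refine posSemidef_iff_dotProduct_mulVec.mpr ⟨?_, fun y => ?_⟩
  · exact (isHermitian_one.smul (.all a)).sub
      ((posSemidef_vecMulVec_self_star v).isHermitian.smul (.all b))
  · have hcs := sq_dotProduct_le v y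
    have hy : 0 ≤ y ⬝ᵥ y := dotProduct_self_star_nonneg y
    rw [star_trivial, smul_one_sub_smul_vecMulVec_mulVec, dotProduct_sub, dotProduct_smul,
      dotProduct_smul, smul_eq_mul, smul_eq_mul, dotProduct_comm y v]
    nlinarith [mul_le_mul_of_nonneg_right h hy]

theorem Matrix.norm_toEuclideanCLM_smul_one_sub_smul_vecMulVec_le (hb : 0 ≤ b)
    (h : b * (v ⬝ᵥ v) ≤ 2 * a) :
    ‖toEuclideanCLM (𝕜 := ℝ) (a • (1 : Matrix ι ι ℝ) - b • vecMulVec v v)‖ ≤ a := by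
  have hv : 0 ≤ v ⬝ᵥ v := by simpa using dotProduct_self_star_nonneg v
  refine norm_toEuclideanCLM_le (by nlinarith) fun y => ?_
  have hcs := sq_dotProduct_le v y
  rw [smul_one_sub_smul_vecMulVec_mulVec]
  simp only [dotProduct_sub, sub_dotProduct, dotProduct_smul, smul_dotProduct, smul_eq_mul,
    dotProduct_comm y v]
  have : 0 ≤ b * (v ⬝ᵥ y) ^ 2 * (2 * a - b * (v ⬝ᵥ v)) :=
    mul_nonneg (mul_nonneg hb (sq_nonneg _)) (by linarith)
  linear_combination this

end RankOneUpdate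

theorem stmt_11 (n : ℕ) (μ : ℝ) (hμ : 0 < μ) (c x : EuclideanSpace ℝ (Fin n)) :
    (hessMat n μ c x).PosSemidef ∧
      ‖Matrix.toEuclideanCLM (𝕜 := ℝ) (hessMat n μ c x)‖ ≤ 1 / μ ∧
        (x ≠ c →
          (hessMat n μ c x).charpoly =
            (Polynomial.X - Polynomial.C (Real.sqrt (‖x - c‖ ^ 2 + μ ^ 2))⁻¹) ^ (n - 1) *
              (Polynomial.X -
                Polynomial.C (μ ^ 2 / (Real.sqrt (‖x - c‖ ^ 2 + μ ^ 2)) ^ 3))) := by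
  set g := √(‖x - c‖ ^ 2 + μ ^ 2)
  set v := (x - c).ofLp
  have hM : hessMat n μ c x = g⁻¹ • 1 - (g ^ 3)⁻¹ • vecMulVec v v := rfl
  have hv : v ⬝ᵥ v = g ^ 2 - μ ^ 2 := by
    rw [Real.sq_sqrt (by positivity), EuclideanSpace.real_norm_sq_eq_dotProduct]
    ring
  have hg : 0 < g := by positivity
  have hμg : μ ≤ g := Real.le_sqrt_of_sq_le (by nlinarith [sq_nonneg ‖x - c‖])
  have hbv : (g ^ 3)⁻¹ * (v ⬝ᵥ v) ≤ g⁻¹ := by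
    rw [hv]; field_simp; nlinarith
  rw [hM]
  clear_value g v
  have hb : 0 ≤ (g ^ 3)⁻¹ := by positivity
  refine ⟨posSemidef_smul_one_sub_smul_vecMulVec hb hbv,
    (norm_toEuclideanCLM_smul_one_sub_smul_vecMulVec_le hb
      (by linarith [inv_nonneg.2 hg.le])).trans ?_, fun hxc => ?_⟩
  · rw [one_div]; exact inv_anti₀ hμ hμg
  · obtain ⟨i, -⟩ : ∃ i, x i ≠ c i := by
      contrapose! hxc
      exact PiLp.ext hxc
    have : Nonempty (Fin n) := ⟨i⟩
    rw [← smul_vecMulVec, charpoly_smul_one_sub_vecMulVec, Fintype.card_fin, smul_dotProduct, hv,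
      smul_eq_mul]
    congr 3
    field_simp
    ring
end

section
/- Let H be a symmetric n×n real matrix with σ_min I_n ⪯ H ⪯ σ_max I_n for some 0 < σ_min ≤ σ_max (i.e., σ_min‖v‖² ≤ ⟨v, H v⟩ ≤ σ_max‖v‖² for all v), let g, d ∈ ℝ^n and η ≥ 0 with ‖H d + g‖ ≤ η‖g‖. Then ((1 − η)/σ_max)‖g‖ ≤ ‖d‖ ≤ ((1 + η)/σ_min)‖g‖. -/
open scoped RealInnerProductSpace

theorem stmt_14 (n : ℕ) (H : Matrix (Fin n) (Fin n) ℝ) (hsymm : H.IsSymm)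
    (σmin σmax : ℝ) (hσmin : 0 < σmin) (hσ : σmin ≤ σmax)
    (hbound : ∀ v : EuclideanSpace ℝ (Fin n),
      σmin * ‖v‖ ^ 2 ≤ ⟪v, Matrix.toEuclideanCLM (𝕜 := ℝ) H v⟫ ∧
        ⟪v, Matrix.toEuclideanCLM (𝕜 := ℝ) H v⟫ ≤ σmax * ‖v‖ ^ 2)
    (g d : EuclideanSpace ℝ (Fin n)) (η : ℝ) (hη : 0 ≤ η)
    (hres : ‖Matrix.toEuclideanCLM (𝕜 := ℝ) H d + g‖ ≤ η * ‖g‖) :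
    (1 - η) / σmax * ‖g‖ ≤ ‖d‖ ∧ ‖d‖ ≤ (1 + η) / σmin * ‖g‖ := by
  set T : EuclideanSpace ℝ (Fin n) →L[ℝ] EuclideanSpace ℝ (Fin n) :=
    Matrix.toEuclideanCLM (𝕜 := ℝ) H with hT
  have hσmax : 0 < σmax := lt_of_lt_of_le hσmin hσ
  -- T is self-adjoint
  have hsa : IsSelfAdjoint T := by
    have hH : IsSelfAdjoint H := by
      show star H = H
      rw [Matrix.star_eq_conjTranspose]
      ext i j
      simpa [Matrix.conjTranspose_apply] using (congrFun (congrFun hsymm j) i).symm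
    rw [hT, IsSelfAdjoint, ← map_star]
    exact congrArg _ hH
  have hsymT : ∀ x y : EuclideanSpace ℝ (Fin n), ⟪T x, y⟫ = ⟪x, T y⟫ :=
    fun x y => hsa.isSymmetric x y
  -- ‖T v‖ ≤ σmax * ‖v‖
  have hub : ∀ v : EuclideanSpace ℝ (Fin n), ‖T v‖ ≤ σmax * ‖v‖ := by
    intro v
    by_cases hv : v = 0
    · simp [hv]
    have hvn : 0 < ‖v‖ := norm_pos_iff.mpr hv
    set b : ℝ := ‖T v‖ ^ 2 with hb
    set c : ℝ := ⟪v, T v⟫ with hc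
    have hcpos : 0 < c := lt_of_lt_of_le (by positivity) (hbound v).1
    set a : ℝ := ⟪T v, T (T v)⟫ with ha
    have key : 0 ≤ ⟪c • (T v) - b • v, T (c • (T v) - b • v)⟫ := by
      have := (hbound (c • (T v) - b • v)).1
      nlinarith [sq_nonneg ‖c • (T v) - b • v‖]
    have hexp : ⟪c • (T v) - b • v, T (c • (T v) - b • v)⟫ = c ^ 2 * a - c * b ^ 2 := by
      have h1 : ⟪v, T (T v)⟫ = b := by
        rw [← hsymT v (T v)]
        exact real_inner_self_eq_norm_sq _
      have h2 : ⟪T v, T v⟫ = b := real_inner_self_eq_norm_sq _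
      simp only [map_sub, map_smul, inner_sub_left, inner_sub_right,
        real_inner_smul_left, real_inner_smul_right, h1, h2]
      ring
    have hb2 : b ^ 2 ≤ c * a := by nlinarith [key, hexp]
    have haub : a ≤ σmax * b := by
      have := (hbound (T v)).2
      simpa [ha, hb] using this
    have hcub : c ≤ σmax * ‖v‖ ^ 2 := (hbound v).2
    have hbnn : 0 ≤ b := by positivity
    have step : b ^ 2 ≤ σmax ^ 2 * ‖v‖ ^ 2 * b := by
      nlinarith [mul_le_mul_of_nonneg_left haub hcpos.le,
        mul_le_mul_of_nonneg_right hcub (mul_nonneg hσmax.le hbnn)]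
    have hsq : b ≤ σmax ^ 2 * ‖v‖ ^ 2 := by
      rcases hbnn.lt_or_eq with hb0 | hb0
      · nlinarith
      · rw [← hb0]; positivity
    nlinarith [norm_nonneg (T v), norm_nonneg v, mul_nonneg hσmax.le (norm_nonneg v),
      sq_nonneg (‖T v‖ - σmax * ‖v‖)]
  -- σmin * ‖d‖ ≤ ‖T d‖
  have hlb : σmin * ‖d‖ ≤ ‖T d‖ := by
    by_cases hd : d = 0
    · simp [hd]
    have hdn : 0 < ‖d‖ := norm_pos_iff.mpr hd
    have h1 : σmin * ‖d‖ ^ 2 ≤ ⟪d, T d⟫ := (hbound d).1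
    have h2 : ⟪d, T d⟫ ≤ ‖d‖ * ‖T d‖ := real_inner_le_norm d (T d)
    nlinarith
  have htri1 : ‖g‖ ≤ η * ‖g‖ + σmax * ‖d‖ := by
    have : ‖g‖ ≤ ‖T d + g‖ + ‖T d‖ := by
      calc ‖g‖ = ‖(T d + g) - T d‖ := by rw [add_sub_cancel_left]
        _ ≤ ‖T d + g‖ + ‖T d‖ := norm_sub_le _ _
    have := hub d
    linarith
  have htri2 : σmin * ‖d‖ ≤ (1 + η) * ‖g‖ := by
    have : ‖T d‖ ≤ ‖T d + g‖ + ‖g‖ := by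
      calc ‖T d‖ = ‖(T d + g) - g‖ := by rw [add_sub_cancel_right]
        _ ≤ ‖T d + g‖ + ‖g‖ := norm_sub_le _ _
    linarith [hlb]
  constructor
  · rw [div_mul_eq_mul_div, div_le_iff₀ hσmax]
    nlinarith
  · rw [div_mul_eq_mul_div, le_div_iff₀ hσmin]
    nlinarith
end

section
/- Let φ : ℝ^n → ℝ be bounded below, c₁ > 0, ᾱ > 0, and 0 < σ_min ≤ σ_max. Let (x_j), (d_j), (g_j) be sequences in ℝ^n, (α_j) positive reals, and (H_j) symmetric n×n matrices with σ_min I_n ⪯ H_j ⪯ σ_max I_n, such that for every j: ⟨d_j, g_j⟩ = −⟨d_j, H_j d_j⟩, ‖H_j d_j + g_j‖ ≤ (1/2)‖g_j‖, x_{j+1} = x_j + α_j d_j, α_j ≥ ᾱ, and φ(x_{j+1}) ≤ φ(x_j) + c₁ α_j ⟨d_j, g_j⟩. Then ‖d_j‖ → 0 and ‖g_j‖ → 0 as j → ∞. -/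
open scoped RealInnerProductSpace

lemma aux_norm_apply_le {n : ℕ} (A : Matrix (Fin n) (Fin n) ℝ) (hA : A.IsSymm)
    (M : ℝ) (hM : 0 ≤ M)
    (h1 : ∀ v : EuclideanSpace ℝ (Fin n), 0 ≤ ⟪v, Matrix.toEuclideanCLM (𝕜 := ℝ) A v⟫)
    (h2 : ∀ v : EuclideanSpace ℝ (Fin n), ⟪v, Matrix.toEuclideanCLM (𝕜 := ℝ) A v⟫ ≤ M * ‖v‖ ^ 2)
    (v : EuclideanSpace ℝ (Fin n)) :
    ‖Matrix.toEuclideanCLM (𝕜 := ℝ) A v‖ ≤ M * ‖v‖ := by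
  set T := Matrix.toEuclideanCLM (𝕜 := ℝ) A with hT
  have hherm : A.IsHermitian := by
    rwa [Matrix.IsHermitian, Matrix.conjTranspose_eq_transpose_of_trivial]
  have hsymm : A.toEuclideanLin.IsSymmetric := Matrix.isHermitian_iff_isSymmetric.mp hherm
  have hsym : ∀ u w : EuclideanSpace ℝ (Fin n), ⟪T u, w⟫ = ⟪u, T w⟫ := by
    intro u w
    have := hsymm u w
    simpa [T, ← Matrix.coe_toEuclideanCLM_eq_toEuclideanLin] using this
  have key : ∀ u : EuclideanSpace ℝ (Fin n), 4 * ⟪u, T v⟫ ≤ M * ‖u + v‖ ^ 2 := by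
    intro u
    have e1 : ⟪u + v, T (u + v)⟫ = ⟪u, T u⟫ + ⟪u, T v⟫ + ⟪v, T u⟫ + ⟪v, T v⟫ := by
      rw [map_add, inner_add_left, inner_add_right, inner_add_right]; ring
    have e2 : ⟪u - v, T (u - v)⟫ = ⟪u, T u⟫ - ⟪u, T v⟫ - ⟪v, T u⟫ + ⟪v, T v⟫ := by
      rw [map_sub, inner_sub_left, inner_sub_right, inner_sub_right]; ring
    have h3 := h2 (u + v)
    have h4 := h1 (u - v)
    nlinarith [e1, e2, real_inner_comm v (T u), hsym u v]
  by_cases hv0 : T v = 0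
  · simp [hv0]; positivity
  have hTv : 0 < ‖T v‖ := norm_pos_iff.mpr hv0
  by_cases hv : v = 0
  · exact absurd (by rw [hv]; simp) hv0
  have hvn : 0 < ‖v‖ := norm_pos_iff.mpr hv
  set u : EuclideanSpace ℝ (Fin n) := (‖v‖ / ‖T v‖) • T v with hu
  have hun : ‖u‖ = ‖v‖ := by
    rw [hu, norm_smul, Real.norm_of_nonneg (by positivity), div_mul_cancel₀ _ hTv.ne']
  have hip : ⟪u, T v⟫ = ‖v‖ * ‖T v‖ := by
    rw [hu, real_inner_smul_left, real_inner_self_eq_norm_sq]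
    field_simp
  have hkey := key u
  rw [hip] at hkey
  have hnuv : ‖u + v‖ ^ 2 ≤ (‖u‖ + ‖v‖) ^ 2 := by
    have := norm_add_le u v
    nlinarith [norm_nonneg (u + v), norm_nonneg u, norm_nonneg v]
  have h5 : M * ‖u + v‖ ^ 2 ≤ M * (‖u‖ + ‖v‖) ^ 2 := mul_le_mul_of_nonneg_left hnuv hM
  rw [hun] at h5
  nlinarith [hkey, h5, hvn]
theorem stmt_16 (n : ℕ) (φ : EuclideanSpace ℝ (Fin n) → ℝ)
    (B : ℝ) (hB : ∀ y, B ≤ φ y)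
    (c₁ αbar σmin σmax : ℝ) (hc₁ : 0 < c₁) (hαbar : 0 < αbar)
    (hσmin : 0 < σmin) (hσ : σmin ≤ σmax)
    (x d g : ℕ → EuclideanSpace ℝ (Fin n)) (α : ℕ → ℝ)
    (H : ℕ → Matrix (Fin n) (Fin n) ℝ)
    (hsymm : ∀ j, (H j).IsSymm)
    (hbound : ∀ j, ∀ v : EuclideanSpace ℝ (Fin n),
      σmin * ‖v‖ ^ 2 ≤ ⟪v, Matrix.toEuclideanCLM (𝕜 := ℝ) (H j) v⟫ ∧
        ⟪v, Matrix.toEuclideanCLM (𝕜 := ℝ) (H j) v⟫ ≤ σmax * ‖v‖ ^ 2)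
    (hdescent : ∀ j, ⟪d j, g j⟫ = -⟪d j, Matrix.toEuclideanCLM (𝕜 := ℝ) (H j) (d j)⟫)
    (hres : ∀ j, ‖Matrix.toEuclideanCLM (𝕜 := ℝ) (H j) (d j) + g j‖ ≤ 1 / 2 * ‖g j‖)
    (hstep : ∀ j, x (j + 1) = x j + α j • d j)
    (hαpos : ∀ j, 0 < α j) (hα : ∀ j, αbar ≤ α j)
    (hdec : ∀ j, φ (x (j + 1)) ≤ φ (x j) + c₁ * α j * ⟪d j, g j⟫) :
    Filter.Tendsto (fun j => ‖d j‖) Filter.atTop (nhds 0) ∧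
      Filter.Tendsto (fun j => ‖g j‖) Filter.atTop (nhds 0) := by
  set C : ℝ := c₁ * αbar * σmin with hC
  have hCpos : 0 < C := by positivity
  -- per-step decrease
  have hstep' : ∀ j, φ (x (j + 1)) + C * ‖d j‖ ^ 2 ≤ φ (x j) := by
    intro j
    have h1 := hdec j
    have h2 := hdescent j
    have h3 := (hbound j (d j)).1
    have hαj := hα j
    have hdg : ⟪d j, g j⟫ ≤ -(σmin * ‖d j‖ ^ 2) := by rw [h2]; linarith
    have hdg0 : ⟪d j, g j⟫ ≤ 0 := by nlinarith [sq_nonneg ‖d j‖]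
    have : c₁ * α j * ⟪d j, g j⟫ ≤ -(C * ‖d j‖ ^ 2) := by
      have := mul_le_mul_of_nonneg_left hdg (le_of_lt (mul_pos hc₁ (hαpos j)))
      have h5 : c₁ * α j * ⟪d j, g j⟫ ≤ c₁ * αbar * ⟪d j, g j⟫ :=
        mul_le_mul_of_nonpos_right (mul_le_mul_of_nonneg_left hαj hc₁.le) hdg0
      nlinarith [sq_nonneg ‖d j‖]
    linarith
  -- partial sums bounded
  have hpartial : ∀ N, C * ∑ j ∈ Finset.range N, ‖d j‖ ^ 2 ≤ φ (x 0) - B := by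
    intro N
    have key : ∀ N, φ (x N) + C * ∑ j ∈ Finset.range N, ‖d j‖ ^ 2 ≤ φ (x 0) := by
      intro N
      induction N with
      | zero => simp
      | succ N ih =>
        rw [Finset.sum_range_succ]
        have := hstep' N
        linarith
    have := key N
    have := hB (x N)
    linarith
  have hsum : Summable (fun j => ‖d j‖ ^ 2) := by
    apply summable_of_sum_range_le (fun j => sq_nonneg _)
    intro N
    have := hpartial N
    calc ∑ j ∈ Finset.range N, ‖d j‖ ^ 2 ≤ (φ (x 0) - B) / C := by
          rw [le_div_iff₀ hCpos]; linarith [hpartial N]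
      _ = (φ (x 0) - B) / C := rfl
  have hd2 : Filter.Tendsto (fun j => ‖d j‖ ^ 2) Filter.atTop (nhds 0) :=
    hsum.tendsto_atTop_zero
  have hd : Filter.Tendsto (fun j => ‖d j‖) Filter.atTop (nhds 0) := by
    have := hd2.sqrt
    simpa [Real.sqrt_sq (norm_nonneg _)] using this
  refine ⟨hd, ?_⟩
  -- bound on g
  have hg : ∀ j, ‖g j‖ ≤ 2 * σmax * ‖d j‖ := by
    intro j
    have hHd : ‖Matrix.toEuclideanCLM (𝕜 := ℝ) (H j) (d j)‖ ≤ σmax * ‖d j‖ := by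
      apply aux_norm_apply_le (H j) (hsymm j) σmax (le_trans hσmin.le hσ)
      · intro v; nlinarith [(hbound j v).1, sq_nonneg ‖v‖]
      · intro v; exact (hbound j v).2
    have h6 := hres j
    have h7 : ‖g j‖ ≤ ‖Matrix.toEuclideanCLM (𝕜 := ℝ) (H j) (d j) + g j‖ +
        ‖Matrix.toEuclideanCLM (𝕜 := ℝ) (H j) (d j)‖ := by
      calc ‖g j‖ = ‖(Matrix.toEuclideanCLM (𝕜 := ℝ) (H j) (d j) + g j) -
          Matrix.toEuclideanCLM (𝕜 := ℝ) (H j) (d j)‖ := by rw [add_sub_cancel_left]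
        _ ≤ _ := norm_sub_le _ _
    linarith
  have htend : Filter.Tendsto (fun j => 2 * σmax * ‖d j‖) Filter.atTop (nhds 0) := by
    have := hd.const_mul (2 * σmax)
    simpa using this
  exact squeeze_zero (fun j => norm_nonneg _) hg htend
end

section
/- Let x* ∈ ℝ^n be the unique minimizer of f, i.e., f(x*) < f(y) for all y ≠ x*. Let (μ_k) be positive reals with μ_k → 0, let C ∈ ℝ, and let (x_k) be a sequence in ℝ^n with f(x_k) ≤ C for all k and ‖∇f(x_k; μ_k)‖ → 0, where ∇f(x;μ) = Σ_{i=1}^m λ_i(x;μ)(x − c_i)/g_i(x;μ). Then x_k → x*. -/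
open Real Filter

/-!
The smoothing `f(·;μ)` is convex with gradient `∇f(·;μ)` and satisfies
`f ≤ f(·;μ) ≤ f + μ (1 + log m)`. The gradient inequality at `x_k`, tested at `x*`, therefore gives
`f(x_k) ≤ f(x*) + ‖∇f(x_k;μ_k)‖ ‖x* - x_k‖ + μ_k (1 + log m)`, and `(x_k)` stays in a ball because
`f(x_k) ≤ C`; so `f(x_k) → f(x*)`. By continuity of `f`, every cluster point of the bounded sequence
`(x_k)` is then a minimizer of `f`, hence equal to `x*`.
-/

open RealInnerProductSpace Topology

theorem Real.le_log_sum_exp {ι : Type*} [Fintype ι] (a : ι → ℝ) (i : ι) :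
    a i ≤ log (∑ j, exp (a j)) := by
  rw [le_log_iff_exp_le (Finset.sum_pos (fun j _ => exp_pos _) ⟨i, Finset.mem_univ i⟩)]
  exact Finset.single_le_sum (f := fun j => exp (a j)) (fun j _ => (exp_pos _).le)
    (Finset.mem_univ i)

theorem Real.log_sum_exp_le {ι : Type*} [Fintype ι] [Nonempty ι] {a : ι → ℝ} {M : ℝ}
    (h : ∀ i, a i ≤ M) : log (∑ i, exp (a i)) ≤ M + log (Fintype.card ι) := by
  have hcard : (0 : ℝ) < Fintype.card ι := by exact_mod_cast Fintype.card_pos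
  calc log (∑ i, exp (a i)) ≤ log (Fintype.card ι * exp M) := by
        refine log_le_log (Finset.sum_pos (fun i _ => exp_pos _) Finset.univ_nonempty) ?_
        simpa using Finset.sum_le_sum fun i (_ : i ∈ Finset.univ) => exp_le_exp.2 (h i)
    _ = M + log (Fintype.card ι) := by
        rw [log_mul hcard.ne' (exp_ne_zero M), log_exp, add_comm]

/-- The gradient inequality for the convex function log-sum-exp, whose gradient at `a` is the
softmax `fun i => exp (a i) / ∑ j, exp (a j)`. -/
theorem Real.log_sum_exp_add_sum_softmax_mul_sub_le {ι : Type*} [Fintype ι] [Nonempty ι]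
    (a b : ι → ℝ) :
    log (∑ i, exp (a i)) + ∑ i, exp (a i) / (∑ j, exp (a j)) * (b i - a i)
      ≤ log (∑ i, exp (b i)) := by
  set S := ∑ j, exp (a j)
  have hS : 0 < S := Finset.sum_pos (fun j _ => exp_pos _) Finset.univ_nonempty
  have jensen := convexOn_exp.map_sum_le (t := Finset.univ) (w := fun i => exp (a i) / S)
    (p := fun i => b i - a i) (fun i _ => by positivity)
    (by rw [← Finset.sum_div, div_self hS.ne']) (fun i _ => Set.mem_univ _)
  simp only [smul_eq_mul] at jensen
  have hsum : ∑ i, exp (a i) / S * exp (b i - a i) = (∑ i, exp (b i)) / S := by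
    rw [Finset.sum_div]
    refine Finset.sum_congr rfl fun i _ => ?_
    rw [exp_sub]
    field_simp
  rw [hsum, ← le_log_iff_exp_le (by positivity), log_div (by positivity) hS.ne'] at jensen
  linarith

theorem sqrt_norm_sq_add_sq_add_inner_le {E : Type*} [NormedAddCommGroup E]
    [InnerProductSpace ℝ E] (μ : ℝ) (u v : E) :
    √(‖u‖ ^ 2 + μ ^ 2) + (√(‖u‖ ^ 2 + μ ^ 2))⁻¹ * ⟪u, v - u⟫ ≤ √(‖v‖ ^ 2 + μ ^ 2) := by
  set a := √(‖u‖ ^ 2 + μ ^ 2)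
  set b := √(‖v‖ ^ 2 + μ ^ 2)
  by_cases ha0 : a = 0
  · rw [ha0, zero_add, inv_zero, zero_mul]
    exact Real.sqrt_nonneg _
  have ha : 0 < a := (Real.sqrt_nonneg _).lt_of_ne' ha0
  -- Cauchy–Schwarz twice: in `E`, and for the vectors `(‖u‖, μ)`, `(‖v‖, μ)` of `ℝ²`.
  have hab : ‖u‖ * ‖v‖ + μ ^ 2 ≤ a * b := by
    rw [← Real.sqrt_mul (by positivity), Real.le_sqrt (by positivity) (by positivity)]
    nlinarith [sq_nonneg (‖u‖ - ‖v‖), sq_nonneg μ]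
  have hinner : ⟪u, v - u⟫ ≤ ‖u‖ * ‖v‖ - ‖u‖ ^ 2 := by
    rw [inner_sub_right, real_inner_self_eq_norm_sq]
    linarith [real_inner_le_norm u v]
  have ha2 : a ^ 2 = ‖u‖ ^ 2 + μ ^ 2 := Real.sq_sqrt (by positivity)
  rw [show a + a⁻¹ * ⟪u, v - u⟫ = (a ^ 2 + ⟪u, v - u⟫) / a by field_simp, div_le_iff₀ ha]
  nlinarith

theorem IsCompact.tendsto_nhds_of_tendsto_comp {X Y α : Type*} [TopologicalSpace X]
    [TopologicalSpace Y] [T2Space Y] {s : Set X} {l : Filter α} {u : α → X} {f : X → Y} {x : X}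
    (hs : IsCompact s) (hu : ∀ᶠ a in l, u a ∈ s) (hf : Continuous f)
    (hfx : ∀ y ∈ s, f y = f x → y = x) (hfu : Tendsto (f ∘ u) l (𝓝 (f x))) :
    Tendsto u l (𝓝 x) :=
  hs.tendsto_nhds_of_unique_mapClusterPt hu fun y hy hy' =>
    hfx y hy (eq_of_nhds_neBot ((hy'.continuousAt_comp hf.continuousAt).clusterPt.mono hfu).neBot)

section SmoothedEnclosingBall

variable {n m : ℕ} (c : Fin m → EuclideanSpace ℝ (Fin n)) (r : Fin m → ℝ)

theorem le_sebF (x : EuclideanSpace ℝ (Fin n)) (i : Fin m) : ‖x - c i‖ + r i ≤ sebF c r x :=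
  le_ciSup (f := fun i => ‖x - c i‖ + r i) (Set.finite_range _).bddAbove i

theorem continuous_sebF [NeZero m] : Continuous (sebF c r) := by
  have h : sebF c r =
      fun x => Finset.univ.sup' Finset.univ_nonempty fun i => ‖x - c i‖ + r i := by
    funext x
    rw [sebF, Finset.sup'_univ_eq_ciSup]
  rw [h]
  exact Continuous.finset_sup'_apply _ fun i _ => by fun_prop

theorem sebFi_add_inner_le (μ : ℝ) (x y : EuclideanSpace ℝ (Fin n)) (i : Fin m) :
    sebFi c r μ x i + (sebG c μ x i)⁻¹ * ⟪x - c i, y - x⟫ ≤ sebFi c r μ y i := by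
  have h := sqrt_norm_sq_add_sq_add_inner_le μ (x - c i) (y - c i)
  rw [sub_sub_sub_cancel_right] at h
  simp only [sebFi, sebG]
  linarith

variable {μ : ℝ}

theorem sebF_le_sebFmu [NeZero m] (hμ : 0 < μ) (x : EuclideanSpace ℝ (Fin n)) :
    sebF c r x ≤ sebFmu c r μ x := by
  refine ciSup_le fun i => ?_
  have hG : ‖x - c i‖ ≤ sebG c μ x i :=
    Real.le_sqrt_of_sq_le (le_add_of_nonneg_right (sq_nonneg μ))
  have hFi : sebFi c r μ x i ≤ sebFmu c r μ x :=
    (div_le_iff₀' hμ).1 (Real.le_log_sum_exp (fun j => sebFi c r μ x j / μ) i)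
  simp only [sebFi] at hFi
  linarith

theorem sebFmu_le_sebF_add [NeZero m] (hμ : 0 < μ) (x : EuclideanSpace ℝ (Fin n)) :
    sebFmu c r μ x ≤ sebF c r x + μ * (1 + Real.log m) := by
  have hFi (i : Fin m) : sebFi c r μ x i / μ ≤ (sebF c r x + μ) / μ := by
    have hG : sebG c μ x i ≤ ‖x - c i‖ + μ :=
      (Real.sqrt_le_left (by positivity)).2 (by nlinarith [norm_nonneg (x - c i)])
    have := le_sebF c r x i
    rw [div_le_div_iff_of_pos_right hμ, sebFi]
    linarith
  have h := Real.log_sum_exp_le hFi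
  rw [Fintype.card_fin] at h
  calc sebFmu c r μ x ≤ μ * ((sebF c r x + μ) / μ + Real.log m) :=
        mul_le_mul_of_nonneg_left h hμ.le
    _ = sebF c r x + μ * (1 + Real.log m) := by field_simp; ring

theorem sebFmu_add_inner_sebGrad_le [NeZero m] (hμ : 0 < μ) (x y : EuclideanSpace ℝ (Fin n)) :
    sebFmu c r μ x + ⟪sebGrad c r μ x, y - x⟫ ≤ sebFmu c r μ y := by
  have hconv := Real.log_sum_exp_add_sum_softmax_mul_sub_le
    (fun i => sebFi c r μ x i / μ) (fun i => sebFi c r μ y i / μ)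
  have hinner : ⟪sebGrad c r μ x, y - x⟫
      = ∑ i, sebLam c r μ x i * ((sebG c μ x i)⁻¹ * ⟪x - c i, y - x⟫) := by
    simp only [sebGrad, sebGradI, sum_inner, real_inner_smul_left]
  have hle : ⟪sebGrad c r μ x, y - x⟫
      ≤ μ * ∑ i, sebLam c r μ x i * (sebFi c r μ y i / μ - sebFi c r μ x i / μ) := by
    rw [hinner, Finset.mul_sum]
    refine Finset.sum_le_sum fun i _ => ?_
    have hlam : 0 ≤ sebLam c r μ x i := by unfold sebLam; positivity
    have hμ_mul : μ * (sebLam c r μ x i * (sebFi c r μ y i / μ - sebFi c r μ x i / μ))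
        = sebLam c r μ x i * (sebFi c r μ y i - sebFi c r μ x i) := by
      field_simp
    rw [hμ_mul]
    exact mul_le_mul_of_nonneg_left (by linarith [sebFi_add_inner_le c r μ x y i]) hlam
  unfold sebFmu
  have := mul_le_mul_of_nonneg_left hconv hμ.le
  simp only [sebLam] at hle
  linarith

theorem sebF_le_sebF_add_norm_sebGrad_mul [NeZero m] (hμ : 0 < μ) (x y : EuclideanSpace ℝ (Fin n)) :
    sebF c r x ≤ sebF c r y + ‖sebGrad c r μ x‖ * ‖y - x‖ + μ * (1 + Real.log m) := by
  have := neg_abs_le ⟪sebGrad c r μ x, y - x⟫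
  linarith [abs_real_inner_le_norm (sebGrad c r μ x) (y - x), sebF_le_sebFmu c r hμ x,
    sebFmu_add_inner_sebGrad_le c r hμ x y, sebFmu_le_sebF_add c r hμ y]

end SmoothedEnclosingBall

theorem stmt_17_general (n m : ℕ) (hm : 1 ≤ m) (c : Fin m → EuclideanSpace ℝ (Fin n))
    (r : Fin m → ℝ)
    (xstar : EuclideanSpace ℝ (Fin n))
    (hxstar : ∀ y, y ≠ xstar → sebF c r xstar < sebF c r y)
    (μ : ℕ → ℝ) (hμ : ∀ k, 0 < μ k) (hμ0 : Filter.Tendsto μ Filter.atTop (nhds 0))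
    (C : ℝ) (x : ℕ → EuclideanSpace ℝ (Fin n)) (hC : ∀ k, sebF c r (x k) ≤ C)
    (hgrad : Filter.Tendsto (fun k => ‖sebGrad c r (μ k) (x k)‖) Filter.atTop (nhds 0)) :
    Filter.Tendsto x Filter.atTop (nhds xstar) := by
  have : NeZero m := ⟨by omega⟩
  set i₀ : Fin m := ⟨0, hm⟩
  have hball (k : ℕ) : x k ∈ Metric.closedBall (c i₀) (C - r i₀) := by
    rw [Metric.mem_closedBall, dist_eq_norm]
    linarith [le_sebF c r (x k) i₀, hC k]
  set B := dist xstar (c i₀) + (C - r i₀)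
  have hupper (k : ℕ) : sebF c r (x k)
      ≤ sebF c r xstar + ‖sebGrad c r (μ k) (x k)‖ * B + μ k * (1 + Real.log m) := by
    have hdist : ‖xstar - x k‖ ≤ B := by
      rw [← dist_eq_norm]
      linarith [dist_triangle_right xstar (x k) (c i₀), Metric.mem_closedBall.1 (hball k)]
    have := mul_le_mul_of_nonneg_left hdist (norm_nonneg (sebGrad c r (μ k) (x k)))
    linarith [sebF_le_sebF_add_norm_sebGrad_mul c r (hμ k) (x k) xstar]
  have hlower (k : ℕ) : sebF c r xstar ≤ sebF c r (x k) := by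
    rcases eq_or_ne (x k) xstar with h | h
    · rw [h]
    · exact (hxstar _ h).le
  have hlim : Tendsto (fun k => sebF c r xstar + ‖sebGrad c r (μ k) (x k)‖ * B
      + μ k * (1 + Real.log m)) atTop (𝓝 (sebF c r xstar)) := by
    simpa using (tendsto_const_nhds.add (hgrad.mul_const B)).add (hμ0.mul_const (1 + Real.log m))
  refine (isCompact_closedBall _ _).tendsto_nhds_of_tendsto_comp (Eventually.of_forall hball)
    (continuous_sebF c r) (fun y _ hy => ?_)
    (tendsto_of_tendsto_of_tendsto_of_le_of_le tendsto_const_nhds hlim hlower hupper)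
  by_contra hne
  exact (hxstar y hne).ne' hy

theorem stmt_17 (n m : ℕ) (hm : 1 ≤ m) (c : Fin m → EuclideanSpace ℝ (Fin n))
    (r : Fin m → ℝ) (hr : ∀ i, 0 ≤ r i)
    (xstar : EuclideanSpace ℝ (Fin n))
    (hxstar : ∀ y, y ≠ xstar → sebF c r xstar < sebF c r y)
    (μ : ℕ → ℝ) (hμ : ∀ k, 0 < μ k) (hμ0 : Filter.Tendsto μ Filter.atTop (nhds 0))
    (C : ℝ) (x : ℕ → EuclideanSpace ℝ (Fin n)) (hC : ∀ k, sebF c r (x k) ≤ C)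
    (hgrad : Filter.Tendsto (fun k => ‖sebGrad c r (μ k) (x k)‖) Filter.atTop (nhds 0)) :
    Filter.Tendsto x Filter.atTop (nhds xstar) :=
  stmt_17_general n m hm c r xstar hxstar μ hμ hμ0 C x hC hgrad
end

section
/- Let x* ∈ ℝ^n be the unique minimizer of f, i.e., f(x*) < f(y) for all y ≠ x*. Let (μ_k) be positive reals with μ_k → 0, and for each k let x_k be a minimizer of f(·;μ_k) over ℝ^n. Then x_k → x*. -/
open Real Filter

section seb_aux
variable {n m : ℕ}

lemma seb_sup'_eq (h : (Finset.univ : Finset (Fin m)).Nonempty)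
    (c : Fin m → EuclideanSpace ℝ (Fin n)) (r : Fin m → ℝ)
    (x : EuclideanSpace ℝ (Fin n)) :
    sebF c r x = Finset.univ.sup' h (fun i => ‖x - c i‖ + r i) := by
  have : Nonempty (Fin m) := Finset.univ_nonempty_iff.mp h
  rw [sebF]
  exact (Finset.sup'_univ_eq_ciSup _).symm

lemma seb_cont (hm : 1 ≤ m) (c : Fin m → EuclideanSpace ℝ (Fin n)) (r : Fin m → ℝ) :
    Continuous (sebF c r) := by
  have : Nonempty (Fin m) := ⟨⟨0, hm⟩⟩
  have h : sebF c r = fun x => Finset.univ.sup' Finset.univ_nonempty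
      (fun i => ‖x - c i‖ + r i) := by
    funext x; exact seb_sup'_eq Finset.univ_nonempty c r x
  rw [h]
  exact Continuous.finset_sup'_apply (f := fun (i : Fin m) (x : EuclideanSpace ℝ (Fin n)) => ‖x - c i‖ + r i)
    Finset.univ_nonempty fun i _ =>
    ((continuous_id.sub continuous_const).norm).add continuous_const

set_option maxHeartbeats 1000000 in
lemma seb_le_fmu (hm : 1 ≤ m) (c : Fin m → EuclideanSpace ℝ (Fin n)) (r : Fin m → ℝ)
    {μ : ℝ} (hμ : 0 < μ) (x : EuclideanSpace ℝ (Fin n)) :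
    sebF c r x ≤ sebFmu c r μ x := by
  have : Nonempty (Fin m) := ⟨⟨0, hm⟩⟩
  apply ciSup_le
  intro i
  have h1 : ‖x - c i‖ + r i ≤ sebFi c r μ x i := by
    have hg : ‖x - c i‖ ≤ sebG c μ x i := by
      rw [sebG]
      have h0 : (0:ℝ) ≤ ‖x - c i‖ ^ 2 + μ ^ 2 := by positivity
      nlinarith [Real.sq_sqrt h0, Real.sqrt_nonneg (‖x - c i‖ ^ 2 + μ ^ 2),
        norm_nonneg (x - c i), sq_nonneg μ]
    rw [sebFi]; linarith
  have h2 : sebFi c r μ x i ≤ sebFmu c r μ x := by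
    have hle : Real.exp (sebFi c r μ x i / μ) ≤ ∑ j : Fin m, Real.exp (sebFi c r μ x j / μ) :=
      Finset.single_le_sum (f := fun j => Real.exp (sebFi c r μ x j / μ))
        (fun j _ => (Real.exp_pos _).le) (Finset.mem_univ i)
    have hlog := Real.log_le_log (Real.exp_pos _) hle
    rw [Real.log_exp] at hlog
    have := mul_le_mul_of_nonneg_left hlog hμ.le
    have heq : μ * (sebFi c r μ x i / μ) = sebFi c r μ x i := by
      field_simp
    rw [sebFmu]
    linarith [this]
  linarith

lemma seb_fmu_le (hm : 1 ≤ m) (c : Fin m → EuclideanSpace ℝ (Fin n)) (r : Fin m → ℝ)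
    {μ : ℝ} (hμ : 0 < μ) (x : EuclideanSpace ℝ (Fin n)) :
    sebFmu c r μ x ≤ sebF c r x + μ * (1 + Real.log m) := by
  have hne : Nonempty (Fin m) := ⟨⟨0, hm⟩⟩
  have hFi : ∀ i, sebFi c r μ x i ≤ sebF c r x + μ := by
    intro i
    have hg : sebG c μ x i ≤ ‖x - c i‖ + μ := by
      rw [sebG]
      have : ‖x - c i‖ + μ = Real.sqrt ((‖x - c i‖ + μ) ^ 2) := by
        rw [Real.sqrt_sq (by positivity)]
      rw [this]
      exact Real.sqrt_le_sqrt (by nlinarith [norm_nonneg (x - c i), hμ.le])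
    have hF : ‖x - c i‖ + r i ≤ sebF c r x := by
      rw [seb_sup'_eq Finset.univ_nonempty c r x]
      exact Finset.le_sup' (f := fun i => ‖x - c i‖ + r i) (Finset.mem_univ i)
    rw [sebFi]; linarith
  have hsum : (∑ j : Fin m, Real.exp (sebFi c r μ x j / μ))
      ≤ (m : ℝ) * Real.exp ((sebF c r x + μ) / μ) := by
    calc (∑ j : Fin m, Real.exp (sebFi c r μ x j / μ))
        ≤ ∑ j : Fin m, Real.exp ((sebF c r x + μ) / μ) := by
          apply Finset.sum_le_sum (f := fun j => Real.exp (sebFi c r μ x j / μ))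
          intro j _
          exact Real.exp_le_exp.mpr (div_le_div_of_nonneg_right (hFi j) hμ.le)
      _ = (m : ℝ) * Real.exp ((sebF c r x + μ) / μ) := by
          rw [Finset.sum_const, Finset.card_univ, Fintype.card_fin, nsmul_eq_mul]
  have hpos : (0:ℝ) < ∑ j : Fin m, Real.exp (sebFi c r μ x j / μ) :=
    Finset.sum_pos (f := fun j => Real.exp (sebFi c r μ x j / μ))
      (fun j _ => Real.exp_pos _) Finset.univ_nonempty
  have hm' : (0:ℝ) < (m:ℝ) := by exact_mod_cast hm
  have hlog := Real.log_le_log hpos hsum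
  rw [Real.log_mul (ne_of_gt hm') (Real.exp_ne_zero _), Real.log_exp] at hlog
  have := mul_le_mul_of_nonneg_left hlog hμ.le
  rw [sebFmu]
  calc μ * Real.log (∑ i : Fin m, Real.exp (sebFi c r μ x i / μ))
      ≤ μ * (Real.log m + (sebF c r x + μ) / μ) := this
    _ = sebF c r x + μ * (1 + Real.log m) := by field_simp; ring

end seb_aux

theorem stmt_19 (n m : ℕ) (hm : 1 ≤ m) (c : Fin m → EuclideanSpace ℝ (Fin n))
    (r : Fin m → ℝ) (hr : ∀ i, 0 ≤ r i)
    (xstar : EuclideanSpace ℝ (Fin n))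
    (hxstar : ∀ y, y ≠ xstar → sebF c r xstar < sebF c r y)
    (μ : ℕ → ℝ) (hμ : ∀ k, 0 < μ k) (hμ0 : Filter.Tendsto μ Filter.atTop (nhds 0))
    (x : ℕ → EuclideanSpace ℝ (Fin n))
    (hmin : ∀ k, ∀ y, sebFmu c r (μ k) (x k) ≤ sebFmu c r (μ k) y) :
    Filter.Tendsto x Filter.atTop (nhds xstar) := by
  have hne : Nonempty (Fin m) := ⟨⟨0, hm⟩⟩
  set C : ℝ := 1 + Real.log m with hCdef
  have hC0 : 0 < C := by
    have : (0:ℝ) ≤ Real.log m := Real.log_nonneg (by exact_mod_cast hm)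
    simp only [hCdef]; linarith
  have key : ∀ k, sebF c r (x k) ≤ sebF c r xstar + μ k * C := by
    intro k
    calc sebF c r (x k) ≤ sebFmu c r (μ k) (x k) := seb_le_fmu hm c r (hμ k) (x k)
      _ ≤ sebFmu c r (μ k) xstar := hmin k xstar
      _ ≤ sebF c r xstar + μ k * C := seb_fmu_le hm c r (hμ k) xstar
  have hcont : Continuous (sebF c r) := seb_cont hm c r
  rw [Metric.tendsto_atTop]
  intro ε hε
  set i0 : Fin m := ⟨0, hm⟩
  set R : ℝ := sebF c r xstar + C + ‖c i0 - xstar‖ with hRdef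
  have hbound : ∀ k, μ k ≤ 1 → dist (x k) xstar ≤ R := by
    intro k hk
    have h1 : ‖x k - c i0‖ + r i0 ≤ sebF c r (x k) := by
      rw [seb_sup'_eq Finset.univ_nonempty c r (x k)]
      exact Finset.le_sup' (f := fun i => ‖x k - c i‖ + r i) (Finset.mem_univ i0)
    have h2 := key k
    have h3 : μ k * C ≤ C := by nlinarith [(hμ k).le]
    have h4 : dist (x k) xstar ≤ ‖x k - c i0‖ + ‖c i0 - xstar‖ := by
      rw [dist_eq_norm]
      calc ‖x k - xstar‖ = ‖(x k - c i0) + (c i0 - xstar)‖ := by abel_nf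
        _ ≤ ‖x k - c i0‖ + ‖c i0 - xstar‖ := norm_add_le _ _
    have h5 := hr i0
    simp only [hRdef]
    linarith
  set K : Set (EuclideanSpace ℝ (Fin n)) :=
    Metric.closedBall xstar R ∩ {y | ε ≤ dist y xstar} with hKdef
  have hKc : IsCompact K :=
    (isCompact_closedBall xstar R).inter_right
      (isClosed_le continuous_const (continuous_id.dist continuous_const))
  obtain ⟨δ, hδ0, hδ⟩ : ∃ δ > 0, ∀ y ∈ K, sebF c r xstar + δ ≤ sebF c r y := by
    rcases Set.eq_empty_or_nonempty K with hKe | hKne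
    · exact ⟨1, one_pos, by simp [hKe]⟩
    · obtain ⟨y0, hy0K, hy0min⟩ := hKc.exists_isMinOn hKne hcont.continuousOn
      refine ⟨sebF c r y0 - sebF c r xstar, ?_, ?_⟩
      · have hy0ne : y0 ≠ xstar := by
          intro h
          have := hy0K.2
          rw [h] at this
          simp only [Set.mem_setOf_eq, dist_self] at this
          linarith
        have := hxstar y0 hy0ne
        linarith
      · intro y hy
        have := hy0min hy
        simp only [Set.mem_setOf_eq] at this
        linarith
  obtain ⟨N, hN⟩ := (Metric.tendsto_atTop.mp hμ0) (min 1 (δ / C))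
    (lt_min one_pos (div_pos hδ0 hC0))
  refine ⟨N, fun k hk => ?_⟩
  by_contra hcon
  push_neg at hcon
  have hμk := hN k hk
  rw [Real.dist_eq, sub_zero, abs_of_pos (hμ k)] at hμk
  have hμ1 : μ k ≤ 1 := (hμk.trans_le (min_le_left _ _)).le
  have hμδ : μ k * C < δ := by
    have h1 : μ k < δ / C := hμk.trans_le (min_le_right _ _)
    calc μ k * C < (δ / C) * C := mul_lt_mul_of_pos_right h1 hC0
      _ = δ := by field_simp
  have hxK : x k ∈ K := ⟨Metric.mem_closedBall.mpr (hbound k hμ1), hcon⟩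
  have := hδ (x k) hxK
  have := key k
  linarith
end
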